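/- arXiv:0810.1997 — 7 statements merged into one kernel-verified Lean document; each statement's English description precedes it below -/
import Mathlib

section
/- Every subgraph of a simple 1-dof Henneberg-I graph satisfies the Laman sparsity condition: if the subgraph has n ≥ 2 vertices, then it has at most 2n − 3 edges. -/
open SimpleGraph

variable {α : Type*} [DecidableEq α]

/-- Validity of a Henneberg-I construction sequence (list of steps `(v, u, w)` meaning
`v ◁ (u, w)`) starting from the vertex set `S`. -/
def ValidFrom (S : Finset α) : List (α × α × α) → Prop
  | [] => True
  | (v, u, w) :: rest => v ∉ S ∧ u ∈ S ∧ w ∈ S ∧ u ≠ w ∧ ValidFrom (insert v S) rest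

/-- The vertex set built by a Henneberg-I construction from base edge `(a, b)`. -/
def buildVerts (a b : α) (l : List (α × α × α)) : Finset α :=
  l.foldl (fun s p => insert p.1 s) {a, b}

/-- The edge set built by a Henneberg-I construction from base edge `(a, b)`. -/
def buildEdges (a b : α) (l : List (α × α × α)) : Finset (Sym2 α) :=
  l.foldl (fun s p => insert s(p.1, p.2.1) (insert s(p.1, p.2.2) s)) {s(a, b)}

/-- `(V, E)` is a Henneberg-I graph with base edge `(a, b)`. -/
def IsHennebergI (V : Finset α) (E : Finset (Sym2 α)) (a b : α) : Prop :=
  a ≠ b ∧ ∃ l, ValidFrom {a, b} l ∧ V = buildVerts a b l ∧ E = buildEdges a b l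

/-- `(V, E)` is a simple 1-dof Henneberg-I graph with base non-edge `(a, b)`:
adding back the base edge `(a, b)` gives a Henneberg-I graph with base edge `(a, b)`. -/
def IsSimple1Dof (V : Finset α) (E : Finset (Sym2 α)) (a b : α) : Prop :=
  s(a, b) ∉ E ∧ IsHennebergI V (insert s(a, b) E) a b

/-- `(V', E')` is a subgraph of `(V, E)`. -/
def IsSubgraphOf (V : Finset α) (E : Finset (Sym2 α)) (V' : Finset α)
    (E' : Finset (Sym2 α)) : Prop :=
  V' ⊆ V ∧ E' ⊆ E ∧ ∀ e ∈ E', ∀ v ∈ e, v ∈ V'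

/-- `(V, E)` is wellconstrained (Laman): `|E| = 2|V| - 3` and every subgraph on `m`
vertices has at most `2m - 3` edges. -/
def IsLaman (V : Finset α) (E : Finset (Sym2 α)) : Prop :=
  E.card + 3 = 2 * V.card ∧
  ∀ V' E', IsSubgraphOf V E V' E' → E'.card ≤ 2 * V'.card - 3

/-- The degree of the vertex `x` in the edge set `E`. -/
def degreeIn (E : Finset (Sym2 α)) (x : α) : ℕ := (E.filter (fun e => x ∈ e)).card

/-- A step `p = (v, u, w)` is constructed directly on the base pair `(a, b)`. -/
def OnBase (a b : α) (p : α × α × α) : Prop :=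
  (p.2.1 = a ∧ p.2.2 = b) ∨ (p.2.1 = b ∧ p.2.2 = a)

/-- The 1-path property: exactly one vertex other than `a` and `b` has degree 2. -/
def OnePath (V : Finset α) (E : Finset (Sym2 α)) (a b : α) : Prop :=
  ∃! x, x ∈ V ∧ x ≠ a ∧ x ≠ b ∧ degreeIn E x = 2

/-- Triangle-decomposability of a graph `(V, E)`. -/
inductive TriDecomp : Finset α → Finset (Sym2 α) → Prop
  | edge (u v : α) (h : u ≠ v) : TriDecomp {u, v} {s(u, v)}
  | triangle (u v w : α) (huv : u ≠ v) (hvw : v ≠ w) (huw : u ≠ w) :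
      TriDecomp {u, v, w} {s(u, v), s(v, w), s(u, w)}
  | merge (V1 V2 V3 : Finset α) (E1 E2 E3 : Finset (Sym2 α)) (v1 v2 v3 : α)
      (h12 : v1 ≠ v2) (h23 : v2 ≠ v3) (h13 : v1 ≠ v3)
      (t1 : TriDecomp V1 E1) (t2 : TriDecomp V2 E2) (t3 : TriDecomp V3 E3)
      (i12 : V1 ∩ V2 = {v3}) (i23 : V2 ∩ V3 = {v1}) (i13 : V1 ∩ V3 = {v2})
      (e12 : E1 ∩ E2 = ∅) (e23 : E2 ∩ E3 = ∅) (e13 : E1 ∩ E3 = ∅) :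
      TriDecomp (V1 ∪ V2 ∪ V3) (E1 ∪ E2 ∪ E3)

/-- `H` is a minor of `G`: branch-set definition. -/
def HasMinor {V W : Type*} (G : SimpleGraph V) (H : SimpleGraph W) : Prop :=
  ∃ f : W → Set V,
    (∀ w, (f w).Nonempty) ∧
    (∀ w, (G.induce (f w)).Connected) ∧
    (∀ w w', w ≠ w' → Disjoint (f w) (f w')) ∧
    ∀ w w', H.Adj w w' → ∃ x ∈ f w, ∃ y ∈ f w', G.Adj x y


/-- Auxiliary: `(V, E)` satisfies the Laman sparsity condition hereditarily. -/
def Sparse (V : Finset α) (E : Finset (Sym2 α)) : Prop :=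
  ∀ V' E', IsSubgraphOf V E V' E' → 2 ≤ V'.card → E'.card ≤ 2 * V'.card - 3

lemma step_sparse (v u w : α) (S : Finset α) (F : Finset (Sym2 α))
    (hv : v ∉ S) (hu : u ∈ S) (hw : w ∈ S) (huw : u ≠ w)
    (hFS : ∀ e ∈ F, ∀ x ∈ e, x ∈ S)
    (hFne : ∀ e ∈ F, ∃ p q, p ≠ q ∧ e = s(p, q))
    (hsp : Sparse S F) :
    Sparse (insert v S) (insert s(v, u) (insert s(v, w) F)) := by
  rintro V' E' ⟨hV', hE', hinc⟩ hcard
  by_cases hvV : v ∈ V'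
  · set E'' := (E'.erase s(v, u)).erase s(v, w) with hE''def
    set V'' := V'.erase v with hV''def
    have hE''F : E'' ⊆ F := by
      intro e he
      have h1 : e ∈ E' := Finset.mem_of_mem_erase (Finset.mem_of_mem_erase he)
      have hne1 : e ≠ s(v, w) := Finset.ne_of_mem_erase he
      have hne2 : e ≠ s(v, u) := Finset.ne_of_mem_erase (Finset.mem_of_mem_erase he)
      have h2 := hE' h1
      rcases Finset.mem_insert.1 h2 with h | h
      · exact absurd h hne2
      rcases Finset.mem_insert.1 h with h | h
      · exact absurd h hne1
      · exact h
    have hnov : ∀ e ∈ E'', v ∉ e := fun e he hve => hv (hFS e (hE''F he) v hve)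
    have hsub'' : IsSubgraphOf S F V'' E'' := by
      refine ⟨?_, hE''F, ?_⟩
      · intro x hx
        have hx' := Finset.mem_of_mem_erase hx
        have hxv : x ≠ v := Finset.ne_of_mem_erase hx
        rcases Finset.mem_insert.1 (hV' hx') with h | h
        · exact absurd h hxv
        · exact h
      · intro e he x hxe
        refine Finset.mem_erase.2 ⟨?_, hinc e (Finset.mem_of_mem_erase (Finset.mem_of_mem_erase he)) x hxe⟩
        rintro rfl
        exact hnov e he hxe
    have hVcard : V''.card = V'.card - 1 := Finset.card_erase_of_mem hvV
    have hE'sub : E' ⊆ insert s(v, u) (insert s(v, w) E'') := by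
      intro e he
      by_cases h1 : e = s(v, u)
      · exact Finset.mem_insert.2 (Or.inl h1)
      by_cases h2 : e = s(v, w)
      · exact Finset.mem_insert.2 (Or.inr (Finset.mem_insert.2 (Or.inl h2)))
      · exact Finset.mem_insert.2 (Or.inr (Finset.mem_insert.2 (Or.inr
          (Finset.mem_erase.2 ⟨h2, Finset.mem_erase.2 ⟨h1, he⟩⟩))))
    have hEcard : E'.card ≤ E''.card + 2 := by
      calc E'.card ≤ (insert s(v, u) (insert s(v, w) E'')).card := Finset.card_le_card hE'sub
        _ ≤ (insert s(v, w) E'').card + 1 := Finset.card_insert_le _ _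
        _ ≤ E''.card + 1 + 1 := by
            exact Nat.add_le_add_right (Finset.card_insert_le _ _) 1
    by_cases h2 : 2 ≤ V''.card
    · have hEb := hsp V'' E'' hsub'' h2
      omega
    · -- V''.card = 1
      have h1 : 1 ≤ V''.card := by omega
      have hV1 : V''.card = 1 := by omega
      obtain ⟨x, hx⟩ := Finset.card_eq_one.1 hV1
      have hE''e : E'' = ∅ := by
        apply Finset.eq_empty_of_forall_notMem
        intro e he
        obtain ⟨p, q, hpq, rfl⟩ := hFne e (hE''F he)
        have hp : p ∈ V'' := hsub''.2.2 _ he p (by simp)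
        have hq : q ∈ V'' := hsub''.2.2 _ he q (by simp)
        rw [hx, Finset.mem_singleton] at hp hq
        exact hpq (hp.trans hq.symm)
      have hmemV'' : ∀ y : α, y ≠ v → s(v, y) ∈ E' → y = x := by
        intro y hyv hy
        have hyV : y ∈ V' := hinc _ hy y (by simp)
        have : y ∈ V'' := Finset.mem_erase.2 ⟨hyv, hyV⟩
        rw [hx, Finset.mem_singleton] at this
        exact this
      have hnot : ¬(s(v, u) ∈ E' ∧ s(v, w) ∈ E') := by
        rintro ⟨h1', h2'⟩
        have huv : u ≠ v := fun h => hv (h ▸ hu)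
        have hwv : w ≠ v := fun h => hv (h ▸ hw)
        exact huw ((hmemV'' u huv h1').trans (hmemV'' w hwv h2').symm)
      have hEle : E'.card ≤ 1 := by
        by_cases hA : s(v, u) ∈ E'
        · have : E' ⊆ {s(v, u)} := by
            intro e he
            rcases Finset.mem_insert.1 (hE'sub he) with h | h
            · simp [h]
            rcases Finset.mem_insert.1 h with h | h
            · exact absurd ⟨hA, h ▸ he⟩ hnot
            · simp [hE''e] at h
          simpa using Finset.card_le_card this
        · have : E' ⊆ {s(v, w)} := by
            intro e he
            rcases Finset.mem_insert.1 (hE'sub he) with h | h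
            · exact absurd (h ▸ he) hA
            rcases Finset.mem_insert.1 h with h | h
            · simp [h]
            · simp [hE''e] at h
          simpa using Finset.card_le_card this
      omega
  · -- v ∉ V' : no new edges can be in E'
    have hE'F : E' ⊆ F := by
      intro e he
      rcases Finset.mem_insert.1 (hE' he) with h | h
      · exact absurd (hinc e he v (h ▸ by simp)) hvV
      rcases Finset.mem_insert.1 h with h | h
      · exact absurd (hinc e he v (h ▸ by simp)) hvV
      · exact h
    have hV'S : V' ⊆ S := by
      intro x hx
      rcases Finset.mem_insert.1 (hV' hx) with h | h
      · exact absurd (h ▸ hx) hvV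
      · exact h
    exact hsp V' E' ⟨hV'S, hE'F, hinc⟩ hcard

lemma foldl_sparse : ∀ (l : List (α × α × α)) (S : Finset α) (F : Finset (Sym2 α)),
    ValidFrom S l → (∀ e ∈ F, ∀ x ∈ e, x ∈ S) →
    (∀ e ∈ F, ∃ p q, p ≠ q ∧ e = s(p, q)) → Sparse S F →
    Sparse (l.foldl (fun s p => insert p.1 s) S)
      (l.foldl (fun s p => insert s(p.1, p.2.1) (insert s(p.1, p.2.2) s)) F)
  | [], S, F, _, _, _, hsp => hsp
  | (v, u, w) :: rest, S, F, hval, hFS, hFne, hsp => by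
    obtain ⟨hv, hu, hw, huw, hval'⟩ := hval
    simp only [List.foldl_cons]
    refine foldl_sparse rest _ _ hval' ?_ ?_
      (step_sparse v u w S F hv hu hw huw hFS hFne hsp)
    · intro e he x hxe
      rcases Finset.mem_insert.1 he with h | h
      · subst h
        rcases Sym2.mem_iff.1 hxe with rfl | rfl
        · exact Finset.mem_insert_self _ _
        · exact Finset.mem_insert_of_mem hu
      rcases Finset.mem_insert.1 h with h | h
      · subst h
        rcases Sym2.mem_iff.1 hxe with rfl | rfl
        · exact Finset.mem_insert_self _ _
        · exact Finset.mem_insert_of_mem hw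
      · exact Finset.mem_insert_of_mem (hFS e h x hxe)
    · intro e he
      rcases Finset.mem_insert.1 he with h | h
      · exact ⟨v, u, fun h' => hv (h' ▸ hu), h⟩
      rcases Finset.mem_insert.1 h with h | h
      · exact ⟨v, w, fun h' => hv (h' ▸ hw), h⟩
      · exact hFne e h

/-- Every subgraph of a simple 1-dof Henneberg-I graph satisfies the Laman
sparsity condition: if the subgraph has `n ≥ 2` vertices, it has at most `2n - 3` edges. -/
theorem stmt0 (V : Finset α) (E : Finset (Sym2 α)) (a b : α)
    (hG : IsSimple1Dof V E a b)
    (V' : Finset α) (E' : Finset (Sym2 α)) (hsub : IsSubgraphOf V E V' E')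
    (hn : 2 ≤ V'.card) :
    E'.card ≤ 2 * V'.card - 3 := by
  obtain ⟨hnotE, hab, l, hval, hV, hEfull⟩ := hG
  have hbase : Sparse ({a, b} : Finset α) ({s(a, b)} : Finset (Sym2 α)) := by
    rintro W F ⟨hW, hF, _⟩ hcW
    have hab2 : ({a, b} : Finset α).card ≤ 2 := (Finset.card_insert_le _ _).trans (by simp)
    have h2 : W.card ≤ 2 := le_trans (Finset.card_le_card hW) hab2
    have h1 : F.card ≤ 1 := by simpa using Finset.card_le_card hF
    omega
  have hsp := foldl_sparse l {a, b} {s(a, b)} hval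
    (by
      intro e he x hxe
      simp only [Finset.mem_singleton] at he
      subst he
      rcases Sym2.mem_iff.1 hxe with rfl | rfl <;> simp)
    (by
      intro e he
      simp only [Finset.mem_singleton] at he
      exact ⟨a, b, hab, he⟩)
    hbase
  obtain ⟨hV', hE', hinc⟩ := hsub
  refine hsp V' E' ⟨?_, ?_, hinc⟩ hn
  · rw [hV] at hV'
    exact hV'
  · intro e he
    have : e ∈ insert s(a, b) E := Finset.mem_insert_of_mem (hE' he)
    rw [hEfull] at this
    exact this
end

section
/- No subgraph of a simple 1-dof Henneberg-I graph is overconstrained, i.e., no subgraph on n vertices has more than 2n − 3 edges. -/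
open SimpleGraph

variable {α : Type*} [DecidableEq α]

/-- Invariant for the Henneberg induction: all edges have endpoints in the vertex set,
and every nonempty subgraph satisfies the Laman count. -/
def Good (S : Finset α) (F : Finset (Sym2 α)) : Prop :=
  (∀ e ∈ F, ∀ x ∈ e, x ∈ S) ∧
  ∀ V' E' : Finset _, V' ⊆ S → E' ⊆ F → (∀ e ∈ E', ∀ x ∈ e, x ∈ V') →
    E'.Nonempty → E'.card + 3 ≤ 2 * V'.card

lemma good_step {S : Finset α} {F : Finset (Sym2 α)} {v u w : α}
    (hG : Good S F) (hv : v ∉ S) (hu : u ∈ S) (hw : w ∈ S) (huw : u ≠ w) :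
    Good (insert v S) (insert s(v, u) (insert s(v, w) F)) := by
  obtain ⟨hF, hL⟩ := hG
  have hvu : v ≠ u := fun h => hv (h ▸ hu)
  have hvw : v ≠ w := fun h => hv (h ▸ hw)
  constructor
  · intro e he x hx
    simp only [Finset.mem_insert] at he
    rcases he with rfl | rfl | he
    · rcases Sym2.mem_iff.mp hx with rfl | rfl
      · exact Finset.mem_insert_self _ _
      · exact Finset.mem_insert_of_mem hu
    · rcases Sym2.mem_iff.mp hx with rfl | rfl
      · exact Finset.mem_insert_self _ _
      · exact Finset.mem_insert_of_mem hw
    · exact Finset.mem_insert_of_mem (hF e he x hx)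
  · intro V' E' hV' hE' hcl hne
    by_cases hvV : v ∈ V'
    · -- split off the edges at v
      set E'' := E' \ {s(v, u), s(v, w)} with hE''def
      have hE''F : E'' ⊆ F := by
        intro e he
        rw [hE''def, Finset.mem_sdiff] at he
        obtain ⟨he1, he2⟩ := he
        have := hE' he1
        simp only [Finset.mem_insert] at this
        rcases this with rfl | rfl | h
        · exact absurd (by simp) he2
        · exact absurd (by simp) he2
        · exact h
      have hvE'' : ∀ e ∈ E'', v ∉ e := by
        intro e he hve
        exact hv (hF e (hE''F he) v hve)
      have hclV : ∀ e ∈ E'', ∀ x ∈ e, x ∈ V'.erase v := by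
        intro e he x hx
        refine Finset.mem_erase.mpr ⟨fun h => hvE'' e he (h ▸ hx), ?_⟩
        exact hcl e (Finset.mem_sdiff.mp he).1 x hx
      have hsub : V'.erase v ⊆ S := by
        intro x hx
        obtain ⟨hxv, hxV⟩ := Finset.mem_erase.mp hx
        rcases Finset.mem_insert.mp (hV' hxV) with rfl | h
        · exact absurd rfl hxv
        · exact h
      have hcard : E'.card ≤ E''.card + 2 := by
        have : E' ⊆ E'' ∪ {s(v, u), s(v, w)} := by
          intro e he
          by_cases h : e ∈ ({s(v, u), s(v, w)} : Finset (Sym2 α))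
          · exact Finset.mem_union_right _ h
          · exact Finset.mem_union_left _ (Finset.mem_sdiff.mpr ⟨he, h⟩)
        calc E'.card ≤ (E'' ∪ {s(v, u), s(v, w)}).card := Finset.card_le_card this
          _ ≤ E''.card + ({s(v, u), s(v, w)} : Finset (Sym2 α)).card :=
              Finset.card_union_le _ _
          _ ≤ E''.card + 2 := by
              have := Finset.card_insert_le s(v, u) ({s(v, w)} : Finset (Sym2 α))
              simp only [Finset.card_singleton] at this
              omega
      have hVerase : (V'.erase v).card + 1 = V'.card := Finset.card_erase_add_one hvV
      rcases E''.eq_empty_or_nonempty with hE''e | hE''ne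
      · -- E' ⊆ {s(v,u), s(v,w)}
        have hsub2 : E' ⊆ {s(v, u), s(v, w)} := by
          intro e he
          by_contra h
          have : e ∈ E'' := Finset.mem_sdiff.mpr ⟨he, h⟩
          rw [hE''e] at this; exact absurd this (Finset.notMem_empty e)
        obtain ⟨e, he⟩ := hne
        have hVge2 : 2 ≤ V'.card := by
          rcases Finset.mem_insert.mp (hsub2 he) with rfl | h
          · have h1 : v ∈ V' := hcl _ he v (by simp)
            have h2 : u ∈ V' := hcl _ he u (by simp)
            exact Finset.one_lt_card.mpr ⟨v, h1, u, h2, hvu⟩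
          · rw [Finset.mem_singleton] at h
            subst h
            have h1 : v ∈ V' := hcl _ he v (by simp)
            have h2 : w ∈ V' := hcl _ he w (by simp)
            exact Finset.one_lt_card.mpr ⟨v, h1, w, h2, hvw⟩
        by_cases hboth : E' = {s(v, u), s(v, w)}
        · have hVge3 : 3 ≤ V'.card := by
            have h1 : v ∈ V' := hcl s(v, u) (by rw [hboth]; simp) v (by simp)
            have h2 : u ∈ V' := hcl s(v, u) (by rw [hboth]; simp) u (by simp)
            have h3 : w ∈ V' := hcl s(v, w) (by rw [hboth]; simp) w (by simp)
            have : ({v, u, w} : Finset α) ⊆ V' := by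
              intro x hx; simp only [Finset.mem_insert, Finset.mem_singleton] at hx
              rcases hx with rfl | rfl | rfl <;> assumption
            calc 3 = ({v, u, w} : Finset α).card := by
                  rw [Finset.card_insert_of_notMem (by simp [hvu, hvw]),
                    Finset.card_insert_of_notMem (by simp [huw]), Finset.card_singleton]
              _ ≤ V'.card := Finset.card_le_card this
          have : E'.card ≤ 2 := by
            rw [hboth]
            have := Finset.card_insert_le s(v, u) ({s(v, w)} : Finset (Sym2 α))
            simp only [Finset.card_singleton] at this; omega
          omega
        · have : E' ⊂ {s(v, u), s(v, w)} := Finset.ssubset_iff_subset_ne.mpr ⟨hsub2, hboth⟩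
          have h1 : E'.card < ({s(v, u), s(v, w)} : Finset (Sym2 α)).card :=
            Finset.card_lt_card this
          have h2 : ({s(v, u), s(v, w)} : Finset (Sym2 α)).card ≤ 2 := by
            have := Finset.card_insert_le s(v, u) ({s(v, w)} : Finset (Sym2 α))
            simp only [Finset.card_singleton] at this; omega
          omega
      · have := hL (V'.erase v) E'' hsub hE''F hclV hE''ne
        omega
    · -- v ∉ V' : no new edges can be used
      have hV'S : V' ⊆ S := by
        intro x hx
        rcases Finset.mem_insert.mp (hV' hx) with rfl | h
        · exact absurd hx hvV
        · exact h
      have hE'F : E' ⊆ F := by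
        intro e he
        have := hE' he
        simp only [Finset.mem_insert] at this
        rcases this with rfl | rfl | h
        · exact absurd (hcl _ he v (by simp)) hvV
        · exact absurd (hcl _ he v (by simp)) hvV
        · exact h
      exact hL V' E' hV'S hE'F hcl hne

lemma good_fold (l : List (α × α × α)) :
    ∀ S : Finset α, ∀ F : Finset (Sym2 α), ValidFrom S l → Good S F →
    Good (l.foldl (fun s p => insert p.1 s) S)
      (l.foldl (fun s p => insert s(p.1, p.2.1) (insert s(p.1, p.2.2) s)) F) := by
  induction l with
  | nil => intro S F _ hG; exact hG
  | cons p rest ih =>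
    rintro S F ⟨hv, hu, hw, huw, hrest⟩ hG
    exact ih _ _ hrest (good_step hG hv hu hw huw)

lemma good_base {a b : α} (hab : a ≠ b) : Good ({a, b} : Finset α) {s(a, b)} := by
  constructor
  · intro e he x hx
    rw [Finset.mem_singleton] at he; subst he
    rcases Sym2.mem_iff.mp hx with rfl | rfl <;> simp
  · intro V' E' hV' hE' hcl hne
    obtain ⟨e, he⟩ := hne
    have heq : e = s(a, b) := Finset.mem_singleton.mp (hE' he)
    subst heq
    have ha : a ∈ V' := hcl _ he a (by simp)
    have hb : b ∈ V' := hcl _ he b (by simp)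
    have h2 : 2 ≤ V'.card := Finset.one_lt_card.mpr ⟨a, ha, b, hb, hab⟩
    have h1 : E'.card ≤ 1 := by
      calc E'.card ≤ ({s(a, b)} : Finset (Sym2 α)).card := Finset.card_le_card hE'
        _ = 1 := Finset.card_singleton _
    omega

/-- No subgraph of a simple 1-dof Henneberg-I graph is overconstrained,
i.e. no subgraph on `n` vertices has more than `2n - 3` edges. -/
theorem stmt3 (V : Finset α) (E : Finset (Sym2 α)) (a b : α)
    (hG : IsSimple1Dof V E a b) :
    ¬ ∃ V' E', IsSubgraphOf V E V' E' ∧ 2 * V'.card - 3 < E'.card := by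
  obtain ⟨hnE, hab, l, hvalid, hV, hE⟩ := hG
  rintro ⟨V', E', ⟨hV', hE', hcl⟩, hlt⟩
  have hgood := good_fold l {a, b} {s(a, b)} hvalid (good_base hab)
  have hne : E'.Nonempty := by
    rcases E'.eq_empty_or_nonempty with h | h
    · subst h; simp at hlt
    · exact h
  rw [hV] at hV'
  have hE'F : E' ⊆ buildEdges a b l := by
    rw [← hE]
    exact hE'.trans (Finset.subset_insert _ _)
  have := hgood.2 V' E' hV' hE'F hcl hne
  omega
end

section
/- A subgraph G' of a simple 1-dof Henneberg-I graph is wellconstrained (i.e., satisfies the Laman conditions: |E'| = 2|V'| − 3 and every subgraph of G' on m vertices has at most 2m − 3 edges) if and only if G' is itself a Henneberg-I graph. -/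
open SimpleGraph

variable {α : Type*} [DecidableEq α]

section HennebergAux

/-- Growing a vertex set by a construction list. -/
def growV (S : Finset α) (l : List (α × α × α)) : Finset α :=
  l.foldl (fun s p => insert p.1 s) S

/-- Growing an edge set by a construction list. -/
def growE (E0 : Finset (Sym2 α)) (l : List (α × α × α)) : Finset (Sym2 α) :=
  l.foldl (fun s p => insert s(p.1, p.2.1) (insert s(p.1, p.2.2) s)) E0

lemma buildVerts_eq (a b : α) (l : List (α × α × α)) :
    buildVerts a b l = growV {a, b} l := rfl

lemma buildEdges_eq (a b : α) (l : List (α × α × α)) :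
    buildEdges a b l = growE {s(a, b)} l := rfl

lemma growV_cons (S : Finset α) (p : α × α × α) (l : List (α × α × α)) :
    growV S (p :: l) = growV (insert p.1 S) l := rfl

lemma growE_cons (E0 : Finset (Sym2 α)) (p : α × α × α) (l : List (α × α × α)) :
    growE E0 (p :: l) = growE (insert s(p.1, p.2.1) (insert s(p.1, p.2.2) E0)) l := rfl

lemma growV_append (S : Finset α) (l1 l2 : List (α × α × α)) :
    growV S (l1 ++ l2) = growV (growV S l1) l2 := by
  simp [growV, List.foldl_append]

lemma growE_append (E0 : Finset (Sym2 α)) (l1 l2 : List (α × α × α)) :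
    growE E0 (l1 ++ l2) = growE (growE E0 l1) l2 := by
  simp [growE, List.foldl_append]

lemma subset_growV (S : Finset α) (l : List (α × α × α)) : S ⊆ growV S l := by
  induction l generalizing S with
  | nil => exact Finset.Subset.refl S
  | cons p l ih =>
    rw [growV_cons]
    exact (Finset.subset_insert _ _).trans (ih _)

lemma subset_growE (E0 : Finset (Sym2 α)) (l : List (α × α × α)) : E0 ⊆ growE E0 l := by
  induction l generalizing E0 with
  | nil => exact Finset.Subset.refl E0
  | cons p l ih =>
    rw [growE_cons]
    exact ((Finset.subset_insert _ _).trans (Finset.subset_insert _ _)).trans (ih _)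

lemma validFrom_append (S : Finset α) (l1 l2 : List (α × α × α)) :
    ValidFrom S (l1 ++ l2) ↔ ValidFrom S l1 ∧ ValidFrom (growV S l1) l2 := by
  induction l1 generalizing S with
  | nil => simp [ValidFrom, growV]
  | cons p l ih =>
    obtain ⟨v, u, w⟩ := p
    simp only [List.cons_append, ValidFrom, growV_cons, List.append_eq, ih]
    tauto

/-- The key invariant: all edges have endpoints in the vertex set and are non-degenerate. -/
lemma good_grow (S : Finset α) (E0 : Finset (Sym2 α)) (l : List (α × α × α))
    (hv : ValidFrom S l)
    (h1 : ∀ e ∈ E0, ∀ x ∈ e, x ∈ S) (h2 : ∀ e ∈ E0, ¬ e.IsDiag) :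
    (∀ e ∈ growE E0 l, ∀ x ∈ e, x ∈ growV S l) ∧ (∀ e ∈ growE E0 l, ¬ e.IsDiag) := by
  induction l generalizing S E0 with
  | nil => exact ⟨h1, h2⟩
  | cons p l ih =>
    obtain ⟨v, u, w⟩ := p
    obtain ⟨hvS, huS, hwS, huw, hrest⟩ := hv
    rw [growV_cons, growE_cons]
    apply ih _ _ hrest
    · intro e he x hx
      simp only [Finset.mem_insert] at he
      rcases he with rfl | rfl | he
      · simp only [Sym2.mem_iff] at hx
        rcases hx with rfl | rfl
        · exact Finset.mem_insert_self _ _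
        · exact Finset.mem_insert_of_mem huS
      · simp only [Sym2.mem_iff] at hx
        rcases hx with rfl | rfl
        · exact Finset.mem_insert_self _ _
        · exact Finset.mem_insert_of_mem hwS
      · exact Finset.mem_insert_of_mem (h1 e he x hx)
    · intro e he
      simp only [Finset.mem_insert] at he
      rcases he with rfl | rfl | he
      · simp only [Sym2.mk_isDiag_iff]
        rintro rfl; exact hvS huS
      · simp only [Sym2.mk_isDiag_iff]
        rintro rfl; exact hvS hwS
      · exact h2 e he

lemma card_growV (S : Finset α) (l : List (α × α × α)) (hv : ValidFrom S l) :
    (growV S l).card = S.card + l.length := by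
  induction l generalizing S with
  | nil => simp [growV]
  | cons p l ih =>
    obtain ⟨v, u, w⟩ := p
    obtain ⟨hvS, _, _, _, hrest⟩ := hv
    rw [growV_cons, ih _ hrest, Finset.card_insert_of_notMem hvS]
    simp; omega

lemma card_growE (S : Finset α) (E0 : Finset (Sym2 α)) (l : List (α × α × α))
    (hv : ValidFrom S l) (h1 : ∀ e ∈ E0, ∀ x ∈ e, x ∈ S) :
    (growE E0 l).card = E0.card + 2 * l.length := by
  induction l generalizing S E0 with
  | nil => simp [growE]
  | cons p l ih =>
    obtain ⟨v, u, w⟩ := p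
    obtain ⟨hvS, huS, hwS, huw, hrest⟩ := hv
    have hvu : s(v, u) ∉ E0 := fun h => hvS (h1 _ h v (by simp))
    have hvw : s(v, w) ∉ E0 := fun h => hvS (h1 _ h v (by simp))
    have hne : s(v, u) ≠ s(v, w) := by
      intro h
      rw [Sym2.eq_iff] at h
      rcases h with ⟨-, h⟩ | ⟨h, -⟩
      · exact huw h
      · subst h; exact hvS hwS
    rw [growE_cons]
    rw [ih (insert v S) _ hrest]
    · rw [Finset.card_insert_of_notMem, Finset.card_insert_of_notMem hvw]
      · simp; omega
      · simp only [Finset.mem_insert]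
        push_neg
        exact ⟨hne, hvu⟩
    · intro e he x hx
      simp only [Finset.mem_insert] at he
      rcases he with rfl | rfl | he
      · simp only [Sym2.mem_iff] at hx
        rcases hx with rfl | rfl
        · exact Finset.mem_insert_self _ _
        · exact Finset.mem_insert_of_mem huS
      · simp only [Sym2.mem_iff] at hx
        rcases hx with rfl | rfl
        · exact Finset.mem_insert_self _ _
        · exact Finset.mem_insert_of_mem hwS
      · exact Finset.mem_insert_of_mem (h1 e he x hx)

lemma build_good (a b : α) (hab : a ≠ b) (l : List (α × α × α))
    (hv : ValidFrom {a, b} l) :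
    (∀ e ∈ buildEdges a b l, ∀ x ∈ e, x ∈ buildVerts a b l) ∧
      (∀ e ∈ buildEdges a b l, ¬ e.IsDiag) := by
  rw [buildVerts_eq, buildEdges_eq]
  apply good_grow _ _ _ hv
  · intro e he x hx
    simp only [Finset.mem_singleton] at he
    subst he
    simpa using hx
  · intro e he
    simp only [Finset.mem_singleton] at he
    subst he
    simpa using hab

lemma card_buildVerts (a b : α) (hab : a ≠ b) (l : List (α × α × α))
    (hv : ValidFrom {a, b} l) :
    (buildVerts a b l).card = 2 + l.length := by
  rw [buildVerts_eq, card_growV _ _ hv, Finset.card_insert_of_notMem (by simpa using hab),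
    Finset.card_singleton]

lemma card_buildEdges (a b : α) (hab : a ≠ b) (l : List (α × α × α))
    (hv : ValidFrom {a, b} l) :
    (buildEdges a b l).card = 1 + 2 * l.length := by
  rw [buildEdges_eq, card_growE {a, b} _ _ hv]
  · simp
  · intro e he x hx
    simp only [Finset.mem_singleton] at he
    subst he
    simpa using hx

lemma henneberg_bound (a b : α) (hab : a ≠ b) (l : List (α × α × α))
    (hv : ValidFrom {a, b} l) :
    ∀ W F, IsSubgraphOf (buildVerts a b l) (buildEdges a b l) W F →
      F.card ≤ 2 * W.card - 3 := by
  induction l using List.reverseRecOn with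
  | nil =>
    rintro W F ⟨hWV, hFE, hcl⟩
    have hFE' : F ⊆ {s(a, b)} := hFE
    rcases Finset.subset_singleton_iff.mp hFE' with rfl | rfl
    · simp
    · have ha : a ∈ W := hcl _ (Finset.mem_singleton_self _) a (by simp)
      have hb : b ∈ W := hcl _ (Finset.mem_singleton_self _) b (by simp)
      have h2 : 1 < W.card := Finset.one_lt_card.mpr ⟨a, ha, b, hb, hab⟩
      simp only [Finset.card_singleton]
      omega
  | append_singleton l p ih =>
    obtain ⟨v, u, w⟩ := p
    rw [validFrom_append] at hv
    obtain ⟨hvl, hvp⟩ := hv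
    obtain ⟨hvB, huB, hwB, huw, -⟩ := hvp
    rw [← buildVerts_eq a b l] at hvB huB hwB
    have hV : buildVerts a b (l ++ [(v, u, w)]) = insert v (buildVerts a b l) := by
      rw [buildVerts_eq, growV_append]; rfl
    have hE : buildEdges a b (l ++ [(v, u, w)]) =
        insert s(v, u) (insert s(v, w) (buildEdges a b l)) := by
      rw [buildEdges_eq, growE_append]; rfl
    obtain ⟨hend, hdiag⟩ := build_good a b hab l hvl
    rintro W F ⟨hWV, hFE, hcl⟩
    rw [hV] at hWV
    rw [hE] at hFE
    have hvu : v ≠ u := fun h => hvB (h ▸ huB)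
    have hvw : v ≠ w := fun h => hvB (h ▸ hwB)
    by_cases hvW : v ∈ W
    · classical
      set F2 := F.filter (fun e => v ∈ e) with hF2def
      set F1 := F.filter (fun e => ¬ v ∈ e) with hF1def
      have hsplit : F2.card + F1.card = F.card :=
        Finset.card_filter_add_card_filter_not (fun e => v ∈ e)
      have hF1sub : F1 ⊆ buildEdges a b l := by
        intro e he
        rw [hF1def, Finset.mem_filter] at he
        obtain ⟨heF, hve⟩ := he
        rcases Finset.mem_insert.mp (hFE heF) with rfl | h
        · exact absurd (by simp : v ∈ s(v, u)) hve
        rcases Finset.mem_insert.mp h with rfl | h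
        · exact absurd (by simp : v ∈ s(v, w)) hve
        · exact h
      have hF1cl : ∀ e ∈ F1, ∀ x ∈ e, x ∈ W.erase v := by
        intro e he x hx
        rw [hF1def, Finset.mem_filter] at he
        refine Finset.mem_erase.mpr ⟨?_, hcl e he.1 x hx⟩
        rintro rfl
        exact he.2 hx
      have hb1 : F1.card ≤ 2 * (W.erase v).card - 3 :=
        ih hvl (W.erase v) F1
          ⟨fun x hx => by
            have hx' := Finset.mem_erase.mp hx
            rcases Finset.mem_insert.mp (hWV hx'.2) with h | h
            · exact absurd h hx'.1
            · exact h,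
           hF1sub, hF1cl⟩
      have hecard : (W.erase v).card = W.card - 1 := Finset.card_erase_of_mem hvW
      have hne : s(v, u) ≠ s(v, w) := by
        intro h
        rw [Sym2.eq_iff] at h
        rcases h with ⟨-, h⟩ | ⟨h, -⟩
        · exact huw h
        · exact hvw h
      have hF2sub : F2 ⊆ {s(v, u), s(v, w)} := by
        intro e he
        rw [hF2def, Finset.mem_filter] at he
        obtain ⟨heF, hve⟩ := he
        rcases Finset.mem_insert.mp (hFE heF) with rfl | h
        · simp
        rcases Finset.mem_insert.mp h with rfl | h
        · simp
        · exact absurd (hend e h v hve) hvB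
      have hF2le : F2.card ≤ 2 :=
        le_trans (Finset.card_le_card hF2sub) (le_of_eq (Finset.card_pair hne))
      have hW1 : 1 ≤ W.card := Finset.card_pos.mpr ⟨v, hvW⟩
      have hW2 : 1 ≤ F2.card → 2 ≤ W.card := by
        intro h
        obtain ⟨e, he⟩ := Finset.card_pos.mp h
        have heF := Finset.mem_filter.mp (by rw [← hF2def]; exact he) |>.1
        rcases Finset.mem_insert.mp (hF2sub he) with rfl | h'
        · exact Finset.one_lt_card.mpr ⟨v, hvW, u, hcl _ heF u (by simp), hvu⟩
        · rw [Finset.mem_singleton] at h'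
          subst h'
          exact Finset.one_lt_card.mpr ⟨v, hvW, w, hcl _ heF w (by simp), hvw⟩
      have hW3 : 2 ≤ F2.card → 3 ≤ W.card := by
        intro h
        have hF2eq : F2 = {s(v, u), s(v, w)} :=
          Finset.eq_of_subset_of_card_le hF2sub (by rw [Finset.card_pair hne]; exact h)
        have hm1 : s(v, u) ∈ F := by
          have : s(v, u) ∈ F2 := by rw [hF2eq]; simp
          exact (Finset.mem_filter.mp this).1
        have hm2 : s(v, w) ∈ F := by
          have : s(v, w) ∈ F2 := by rw [hF2eq]; simp
          exact (Finset.mem_filter.mp this).1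
        have huW : u ∈ W := hcl _ hm1 u (by simp)
        have hwW : w ∈ W := hcl _ hm2 w (by simp)
        have hsub3 : ({v, u, w} : Finset α) ⊆ W := by
          intro x hx
          simp only [Finset.mem_insert, Finset.mem_singleton] at hx
          rcases hx with rfl | rfl | rfl
          · exact hvW
          · exact huW
          · exact hwW
        have hc3 : ({v, u, w} : Finset α).card = 3 := by
          rw [Finset.card_insert_of_notMem (by simp [hvu, hvw]),
            Finset.card_insert_of_notMem (by simp [huw]), Finset.card_singleton]
        calc 3 = ({v, u, w} : Finset α).card := hc3.symm
          _ ≤ W.card := Finset.card_le_card hsub3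
      omega
    · have hFsub : F ⊆ buildEdges a b l := by
        intro e he
        rcases Finset.mem_insert.mp (hFE he) with rfl | h
        · exact absurd (hcl _ he v (by simp)) hvW
        rcases Finset.mem_insert.mp h with rfl | h
        · exact absurd (hcl _ he v (by simp)) hvW
        · exact h
      refine ih hvl W F ⟨fun x hx => ?_, hFsub, hcl⟩
      rcases Finset.mem_insert.mp (hWV hx) with rfl | h
      · exact absurd hx hvW
      · exact h

lemma henneberg_isLaman (V' : Finset α) (E' : Finset (Sym2 α)) (x y : α)
    (h : IsHennebergI V' E' x y) : IsLaman V' E' := by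
  obtain ⟨hxy, l, hv, rfl, rfl⟩ := h
  constructor
  · rw [card_buildVerts x y hxy l hv, card_buildEdges x y hxy l hv]
    omega
  · exact fun W F hs => henneberg_bound x y hxy l hv W F hs

lemma laman_sub_henneberg (a b : α) (hab : a ≠ b) (l : List (α × α × α)) :
    ValidFrom {a, b} l → ∀ (V' : Finset α) (E' : Finset (Sym2 α)),
      V' ⊆ buildVerts a b l → E' ⊆ buildEdges a b l →
      s(a, b) ∉ E' → (∀ e ∈ E', ∀ x ∈ e, x ∈ V') → IsLaman V' E' →
      ∃ x y, IsHennebergI V' E' x y := by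
  induction l using List.reverseRecOn with
  | nil =>
    intro hv V' E' hVsub hEsub habE hcl hlam
    have hEsub' : E' ⊆ {s(a, b)} := hEsub
    have hE0 : E' = ∅ := by
      rcases Finset.subset_singleton_iff.mp hEsub' with h | h
      · exact h
      · exact absurd (by rw [h]; simp) habE
    exfalso
    have hcard := hlam.1
    rw [hE0, Finset.card_empty] at hcard
    omega
  | append_singleton l p ih =>
    intro hv V' E' hVsub hEsub habE hcl hlam
    obtain ⟨v, u, w⟩ := p
    rw [validFrom_append] at hv
    obtain ⟨hvl, hvp⟩ := hv
    obtain ⟨hvB, huB, hwB, huw, -⟩ := hvp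
    rw [← buildVerts_eq a b l] at hvB huB hwB
    have hV : buildVerts a b (l ++ [(v, u, w)]) = insert v (buildVerts a b l) := by
      rw [buildVerts_eq, growV_append]; rfl
    have hE : buildEdges a b (l ++ [(v, u, w)]) =
        insert s(v, u) (insert s(v, w) (buildEdges a b l)) := by
      rw [buildEdges_eq, growE_append]; rfl
    rw [hV] at hVsub
    rw [hE] at hEsub
    obtain ⟨hend, hdiag⟩ := build_good a b hab l hvl
    have hvu : v ≠ u := fun h => hvB (h ▸ huB)
    have hvw : v ≠ w := fun h => hvB (h ▸ hwB)
    by_cases hvV' : v ∈ V'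
    · obtain ⟨hcard, hbound⟩ := hlam
      have hV2 : 2 ≤ V'.card := by omega
      by_cases hV'2 : V'.card = 2
      · -- the subgraph is a single edge
        have hE1 : E'.card = 1 := by omega
        obtain ⟨e, rfl⟩ := Finset.card_eq_one.mp hE1
        have heB : e ∈ insert s(v, u) (insert s(v, w) (buildEdges a b l)) :=
          hEsub (Finset.mem_singleton_self e)
        have hed : ¬ e.IsDiag := by
          rcases Finset.mem_insert.mp heB with rfl | h
          · simpa using hvu
          rcases Finset.mem_insert.mp h with rfl | h
          · simpa using hvw
          · exact hdiag e h
        have hcV : ∀ x ∈ e, x ∈ V' := hcl e (Finset.mem_singleton_self e)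
        have hex : ∃ c d, e = s(c, d) := by
          induction e using Sym2.ind with
          | _ c d => exact ⟨c, d, rfl⟩
        obtain ⟨c, d, rfl⟩ := hex
        have hcd : c ≠ d := by simpa using hed
        have hVeq : ({c, d} : Finset α) = V' := by
          apply Finset.eq_of_subset_of_card_le
          · intro x hx
            simp only [Finset.mem_insert, Finset.mem_singleton] at hx
            rcases hx with rfl | rfl
            · exact hcV x (by simp)
            · exact hcV x (by simp)
          · rw [Finset.card_pair hcd, hV'2]
        exact ⟨c, d, hcd, [], trivial, hVeq.symm, rfl⟩
      · have hV3 : 3 ≤ V'.card := by omega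
        classical
        set F2 := E'.filter (fun e => v ∈ e) with hF2def
        set F1 := E'.filter (fun e => ¬ v ∈ e) with hF1def
        have hsplit : F2.card + F1.card = E'.card :=
          Finset.card_filter_add_card_filter_not (fun e => v ∈ e)
        have hF1sub : F1 ⊆ buildEdges a b l := by
          intro e he
          rw [hF1def, Finset.mem_filter] at he
          obtain ⟨heF, hve⟩ := he
          rcases Finset.mem_insert.mp (hEsub heF) with rfl | h
          · exact absurd (by simp : v ∈ s(v, u)) hve
          rcases Finset.mem_insert.mp h with rfl | h
          · exact absurd (by simp : v ∈ s(v, w)) hve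
          · exact h
        have hF1cl : ∀ e ∈ F1, ∀ x ∈ e, x ∈ V'.erase v := by
          intro e he x hx
          rw [hF1def, Finset.mem_filter] at he
          refine Finset.mem_erase.mpr ⟨?_, hcl e he.1 x hx⟩
          rintro rfl
          exact he.2 hx
        have hb1 : F1.card ≤ 2 * (V'.erase v).card - 3 :=
          hbound (V'.erase v) F1
            ⟨Finset.erase_subset v V', Finset.filter_subset _ _, hF1cl⟩
        have hecard : (V'.erase v).card = V'.card - 1 := Finset.card_erase_of_mem hvV'
        have hne : s(v, u) ≠ s(v, w) := by
          intro h
          rw [Sym2.eq_iff] at h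
          rcases h with ⟨-, h⟩ | ⟨h, -⟩
          · exact huw h
          · exact hvw h
        have hF2sub : F2 ⊆ {s(v, u), s(v, w)} := by
          intro e he
          rw [hF2def, Finset.mem_filter] at he
          obtain ⟨heF, hve⟩ := he
          rcases Finset.mem_insert.mp (hEsub heF) with rfl | h
          · simp
          rcases Finset.mem_insert.mp h with rfl | h
          · simp
          · exact absurd (hend e h v hve) hvB
        have hF2le : F2.card ≤ 2 :=
          le_trans (Finset.card_le_card hF2sub) (le_of_eq (Finset.card_pair hne))
        have hd2 : 2 ≤ F2.card := by omega
        have hF2eq : F2 = {s(v, u), s(v, w)} :=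
          Finset.eq_of_subset_of_card_le hF2sub (by rw [Finset.card_pair hne]; exact hd2)
        have hmem1 : s(v, u) ∈ E' := by
          have : s(v, u) ∈ F2 := by rw [hF2eq]; simp
          exact (Finset.mem_filter.mp this).1
        have hmem2 : s(v, w) ∈ E' := by
          have : s(v, w) ∈ F2 := by rw [hF2eq]; simp
          exact (Finset.mem_filter.mp this).1
        have huV' : u ∈ V' := hcl _ hmem1 u (by simp)
        have hwV' : w ∈ V' := hcl _ hmem2 w (by simp)
        have hlam' : IsLaman (V'.erase v) F1 := by
          constructor
          · have hF2c : F2.card = 2 := le_antisymm hF2le hd2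
            rw [hecard]
            omega
          · exact fun W F hs =>
              hbound W F ⟨hs.1.trans (Finset.erase_subset v V'),
                hs.2.1.trans (Finset.filter_subset _ _), hs.2.2⟩
        have hVsub' : V'.erase v ⊆ buildVerts a b l := by
          intro x hx
          have hx' := Finset.mem_erase.mp hx
          rcases Finset.mem_insert.mp (hVsub hx'.2) with h | h
          · exact absurd h hx'.1
          · exact h
        have habE' : s(a, b) ∉ F1 := fun h => habE (Finset.filter_subset _ _ h)
        obtain ⟨x, y, hxy, l', hv', hVeq, hEeq⟩ :=
          ih hvl (V'.erase v) F1 hVsub' hF1sub habE' hF1cl hlam'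
        have hg : growV {x, y} l' = V'.erase v := by
          rw [← buildVerts_eq, ← hVeq]
        refine ⟨x, y, hxy, l' ++ [(v, u, w)], ?_, ?_, ?_⟩
        · rw [validFrom_append]
          refine ⟨hv', ⟨?_, ?_, ?_, huw, trivial⟩⟩
          · rw [hg]; exact Finset.notMem_erase v V'
          · rw [hg]; exact Finset.mem_erase.mpr ⟨fun h => hvu h.symm, huV'⟩
          · rw [hg]; exact Finset.mem_erase.mpr ⟨fun h => hvw h.symm, hwV'⟩
        · have : buildVerts x y (l' ++ [(v, u, w)]) = insert v (buildVerts x y l') := by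
            rw [buildVerts_eq, growV_append]; rfl
          rw [this, ← hVeq, Finset.insert_erase hvV']
        · have hEstep : buildEdges x y (l' ++ [(v, u, w)]) =
              insert s(v, u) (insert s(v, w) (buildEdges x y l')) := by
            rw [buildEdges_eq, growE_append]; rfl
          rw [hEstep, ← hEeq]
          ext e
          simp only [Finset.mem_insert]
          constructor
          · intro he
            by_cases hve : v ∈ e
            · have : e ∈ F2 := Finset.mem_filter.mpr ⟨he, hve⟩
              rw [hF2eq] at this
              simp only [Finset.mem_insert, Finset.mem_singleton] at this
              tauto
            · exact Or.inr (Or.inr (Finset.mem_filter.mpr ⟨he, hve⟩))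
          · rintro (rfl | rfl | he)
            · exact hmem1
            · exact hmem2
            · exact (Finset.mem_filter.mp he).1
    · have hE'sub : E' ⊆ buildEdges a b l := by
        intro e he
        rcases Finset.mem_insert.mp (hEsub he) with rfl | h
        · exact absurd (hcl _ he v (by simp)) hvV'
        rcases Finset.mem_insert.mp h with rfl | h
        · exact absurd (hcl _ he v (by simp)) hvV'
        · exact h
      have hV'sub : V' ⊆ buildVerts a b l := by
        intro x hx
        rcases Finset.mem_insert.mp (hVsub hx) with rfl | h
        · exact absurd hx hvV'
        · exact h
      exact ih hvl V' E' hV'sub hE'sub habE hcl hlam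

end HennebergAux

/-- A subgraph `G'` of a simple 1-dof Henneberg-I graph is wellconstrained
(Laman) if and only if `G'` is itself a Henneberg-I graph. -/
theorem stmt4 (V : Finset α) (E : Finset (Sym2 α)) (a b : α)
    (hG : IsSimple1Dof V E a b)
    (V' : Finset α) (E' : Finset (Sym2 α)) (hsub : IsSubgraphOf V E V' E') :
    IsLaman V' E' ↔ ∃ x y, IsHennebergI V' E' x y := by
  obtain ⟨hVsub, hEsub, hcl⟩ := hsub
  obtain ⟨habE, hab, l, hv, hVeq, hEeq⟩ := hG
  constructor
  · intro hlam
    apply laman_sub_henneberg a b hab l hv V' E'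
    · rw [← hVeq]; exact hVsub
    · intro e he
      rw [← hEeq]
      exact Finset.mem_insert_of_mem (hEsub he)
    · exact fun h => habE (hEsub h)
    · exact hcl
    · exact hlam
  · rintro ⟨x, y, h⟩
    exact henneberg_isLaman V' E' x y h
end

section
/- Let G be a simple 1-dof Henneberg-I graph with a Henneberg construction step v ◁ (u, w). The extreme graph G ∪ {(u,w)} is wellconstrained (Laman) if and only if no wellconstrained subgraph of G contains both u and w. -/
open SimpleGraph

variable {α : Type*} [DecidableEq α]

section StmtSixAux

lemma foldVerts_mono (l : List (α × α × α)) (S : Finset α) :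
    S ⊆ l.foldl (fun s p => insert p.1 s) S := by
  induction l generalizing S with
  | nil => simp
  | cons p rest ih => exact fun x hx => ih _ (Finset.mem_insert_of_mem hx)

lemma step_props (l : List (α × α × α)) (S : Finset α) (hl : ValidFrom S l)
    (v u w : α) (h : (v, u, w) ∈ l) :
    u ≠ w ∧ u ∈ l.foldl (fun s p => insert p.1 s) S ∧
      w ∈ l.foldl (fun s p => insert p.1 s) S := by
  induction l generalizing S with
  | nil => simp at h
  | cons p rest ih =>
    obtain ⟨v',u',w'⟩ := p
    obtain ⟨h1,h2,h3,h4,h5⟩ := hl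
    rcases List.mem_cons.1 h with heq | hmem
    · obtain ⟨rfl, rfl, rfl⟩ : v' = v ∧ u' = u ∧ w' = w := by
        simpa [Prod.ext_iff] using heq.symm
      simp only [List.foldl_cons]
      exact ⟨h4, foldVerts_mono rest _ (Finset.mem_insert_of_mem h2),
        foldVerts_mono rest _ (Finset.mem_insert_of_mem h3)⟩
    · simp only [List.foldl_cons]
      exact ih _ h5 hmem

lemma laman_small_empty (S : Finset α) (E0 : Finset (Sym2 α))
    (hnd : ∀ e ∈ E0, ¬ e.IsDiag) (V' : Finset α) (E' : Finset (Sym2 α))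
    (hsub : IsSubgraphOf S E0 V' E') (hV' : V'.card ≤ 1) : E' = ∅ := by
  rw [Finset.eq_empty_iff_forall_notMem]
  intro e he
  induction e with
  | h p q =>
    have hp : p ∈ V' := hsub.2.2 _ he p (by simp)
    have hq : q ∈ V' := hsub.2.2 _ he q (by simp)
    have hpq : p ≠ q := by
      intro h; exact hnd _ (hsub.2.1 he) (by simp [h])
    have := Finset.one_lt_card.2 ⟨p, hp, q, hq, hpq⟩
    omega

lemma build_main (l : List (α × α × α)) : ∀ (S : Finset α) (E0 : Finset (Sym2 α)),
    ValidFrom S l →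
    (∀ e ∈ E0, ¬ e.IsDiag) →
    (∀ e ∈ E0, ∀ x ∈ e, x ∈ S) →
    E0.card + 3 = 2 * S.card →
    (∀ V' E', IsSubgraphOf S E0 V' E' → 2 ≤ V'.card → E'.card + 3 ≤ 2 * V'.card) →
    (∀ e ∈ l.foldl (fun s p => insert s(p.1, p.2.1) (insert s(p.1, p.2.2) s)) E0, ¬ e.IsDiag) ∧
    (∀ e ∈ l.foldl (fun s p => insert s(p.1, p.2.1) (insert s(p.1, p.2.2) s)) E0,
      ∀ x ∈ e, x ∈ l.foldl (fun s p => insert p.1 s) S) ∧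
    (l.foldl (fun s p => insert s(p.1, p.2.1) (insert s(p.1, p.2.2) s)) E0).card + 3 =
      2 * (l.foldl (fun s p => insert p.1 s) S).card ∧
    ∀ V' E', IsSubgraphOf (l.foldl (fun s p => insert p.1 s) S)
        (l.foldl (fun s p => insert s(p.1, p.2.1) (insert s(p.1, p.2.2) s)) E0) V' E' →
        2 ≤ V'.card → E'.card + 3 ≤ 2 * V'.card := by
  induction l with
  | nil => exact fun S E0 _ hnd hend hcount hbound => ⟨hnd, hend, hcount, hbound⟩
  | cons p rest ih =>
    intro S E0 hl hnd hend hcount hbound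
    obtain ⟨v, u, w⟩ := p
    obtain ⟨hv, hu, hw, huw, hrest⟩ := hl
    simp only [List.foldl_cons]
    have hvu : v ≠ u := fun h => hv (h ▸ hu)
    have hvw : v ≠ w := fun h => hv (h ▸ hw)
    have hvnotend : ∀ e ∈ E0, v ∉ e := fun e he hm => hv (hend e he v hm)
    have hvwne : s(v,u) ≠ s(v,w) := by
      intro hh
      rw [Sym2.eq_iff] at hh
      rcases hh with ⟨-, h⟩ | ⟨h, -⟩
      exacts [huw h, hvw h]
    have hvw0 : s(v,w) ∉ E0 := fun h => hvnotend _ h (by simp)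
    have hvu0 : s(v,u) ∉ insert s(v,w) E0 := by
      simp only [Finset.mem_insert]
      rintro (h | h)
      · exact hvwne h
      · exact hvnotend _ h (by simp)
    apply ih (insert v S) (insert s(v,u) (insert s(v,w) E0)) hrest
    · intro e he
      rcases Finset.mem_insert.1 he with rfl | he
      · simpa using hvu
      rcases Finset.mem_insert.1 he with rfl | he
      · simpa using hvw
      · exact hnd e he
    · intro e he x hx
      rcases Finset.mem_insert.1 he with rfl | he
      · rcases Sym2.mem_iff.1 hx with rfl | rfl
        · exact Finset.mem_insert_self _ _
        · exact Finset.mem_insert_of_mem hu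
      rcases Finset.mem_insert.1 he with rfl | he
      · rcases Sym2.mem_iff.1 hx with rfl | rfl
        · exact Finset.mem_insert_self _ _
        · exact Finset.mem_insert_of_mem hw
      · exact Finset.mem_insert_of_mem (hend e he x hx)
    · rw [Finset.card_insert_of_notMem hvu0, Finset.card_insert_of_notMem hvw0,
        Finset.card_insert_of_notMem hv]
      omega
    · intro V' E' hsub hV2
      by_cases hvV : v ∈ V'
      · set E'' := (E'.erase s(v,u)).erase s(v,w) with hE''def
        have hE''sub : E'' ⊆ E0 := by
          intro e he
          have h1 := Finset.mem_of_mem_erase he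
          have hne2 : e ≠ s(v,w) := Finset.ne_of_mem_erase he
          have hne1 : e ≠ s(v,u) := Finset.ne_of_mem_erase h1
          have heE : e ∈ E' := Finset.mem_of_mem_erase h1
          rcases Finset.mem_insert.1 (hsub.2.1 heE) with rfl | h
          · exact absurd rfl hne1
          rcases Finset.mem_insert.1 h with rfl | h
          · exact absurd rfl hne2
          · exact h
        have hsub'' : IsSubgraphOf S E0 (V'.erase v) E'' := by
          refine ⟨?_, hE''sub, ?_⟩
          · intro x hx
            rcases Finset.mem_insert.1 (hsub.1 (Finset.mem_of_mem_erase hx)) with rfl | h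
            · exact absurd rfl (Finset.ne_of_mem_erase hx)
            · exact h
          · intro e he x hx
            have hxS : x ∈ S := hend e (hE''sub he) x hx
            have hxV : x ∈ V' :=
              hsub.2.2 e (Finset.mem_of_mem_erase (Finset.mem_of_mem_erase he)) x hx
            exact Finset.mem_erase.2 ⟨fun h => hv (h ▸ hxS), hxV⟩
        have hsubset : E' ⊆ insert s(v,u) (insert s(v,w) E'') := by
          intro e he
          by_cases h1 : e = s(v,u)
          · simp [h1]
          by_cases h2 : e = s(v,w)
          · simp [h2]
          · exact Finset.mem_insert_of_mem (Finset.mem_insert_of_mem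
              (Finset.mem_erase.2 ⟨h2, Finset.mem_erase.2 ⟨h1, he⟩⟩))
        have hcard' : E'.card ≤ E''.card + 2 := by
          have h1 := Finset.card_le_card hsubset
          have h2 := Finset.card_insert_le s(v,u) (insert s(v,w) E'')
          have h3 := Finset.card_insert_le s(v,w) E''
          omega
        have hVpos : 1 ≤ V'.card := Finset.card_pos.2 ⟨v, hvV⟩
        have hVe : (V'.erase v).card + 1 = V'.card := by
          rw [Finset.card_erase_of_mem hvV]; omega
        by_cases hV'' : 2 ≤ (V'.erase v).card
        · have := hbound _ _ hsub'' hV''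
          omega
        · have hE''empty : E'' = ∅ :=
            laman_small_empty S E0 hnd _ _ hsub'' (by omega)
          have hsubset2 : E' ⊆ insert s(v,u) {s(v,w)} := by
            intro e he
            have := hsubset he
            rw [hE''empty] at this
            simpa using this
          have hle2 : E'.card ≤ 2 := by
            have h1 := Finset.card_le_card hsubset2
            have h2 := Finset.card_insert_le s(v,u) ({s(v,w)} : Finset (Sym2 α))
            simp at h2
            omega
          rcases Nat.lt_or_ge E'.card 2 with h | h
          · omega
          · exfalso
            have heq : E' = insert s(v,u) {s(v,w)} := by
              apply Finset.eq_of_subset_of_card_le hsubset2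
              rw [Finset.card_insert_of_notMem (by simpa using hvwne), Finset.card_singleton]
              omega
            have h1 : s(v,u) ∈ E' := heq ▸ Finset.mem_insert_self _ _
            have h2 : s(v,w) ∈ E' := heq ▸ Finset.mem_insert_of_mem (Finset.mem_singleton_self _)
            have hu' : u ∈ V'.erase v :=
              Finset.mem_erase.2 ⟨fun h => hv (h ▸ hu), hsub.2.2 _ h1 u (by simp)⟩
            have hw' : w ∈ V'.erase v :=
              Finset.mem_erase.2 ⟨fun h => hv (h ▸ hw), hsub.2.2 _ h2 w (by simp)⟩
            have := Finset.one_lt_card.2 ⟨u, hu', w, hw', huw⟩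
            omega
      · have hE'0 : E' ⊆ E0 := by
          intro e he
          rcases Finset.mem_insert.1 (hsub.2.1 he) with rfl | h
          · exact absurd (hsub.2.2 _ he v (by simp)) hvV
          rcases Finset.mem_insert.1 h with rfl | h
          · exact absurd (hsub.2.2 _ he v (by simp)) hvV
          · exact h
        have hVS : V' ⊆ S := by
          intro x hx
          rcases Finset.mem_insert.1 (hsub.1 hx) with rfl | h
          · exact absurd hx hvV
          · exact h
        exact hbound _ _ ⟨hVS, hE'0, hsub.2.2⟩ hV2

lemma laman_single (u w : α) (huw : u ≠ w) : IsLaman {u, w} {s(u, w)} := by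
  constructor
  · rw [Finset.card_singleton, Finset.card_insert_of_notMem (by simpa using huw),
      Finset.card_singleton]
  · intro V' E' hsub
    rcases Finset.subset_singleton_iff.1 hsub.2.1 with rfl | rfl
    · simp
    · have hu : u ∈ V' := hsub.2.2 _ (Finset.mem_singleton_self _) u (by simp)
      have hw : w ∈ V' := hsub.2.2 _ (Finset.mem_singleton_self _) w (by simp)
      have h2 : 2 ≤ V'.card := Finset.one_lt_card.2 ⟨u, hu, w, hw, huw⟩
      rw [Finset.card_singleton]
      omega

end StmtSixAux


/-- For a simple 1-dof Henneberg-I graph `G` with a construction step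
`v ◁ (u, w)`, the extreme graph `G ∪ {(u,w)}` is wellconstrained (Laman) iff no
wellconstrained subgraph of `G` contains both `u` and `w`. -/
theorem stmt6 (a b : α) (hab : a ≠ b) (l : List (α × α × α))
    (hl : ValidFrom {a, b} l) (v u w : α) (hstep : (v, u, w) ∈ l)
    (V : Finset α) (E : Finset (Sym2 α))
    (hV : V = buildVerts a b l) (hbase : s(a, b) ∉ E)
    (hE : insert s(a, b) E = buildEdges a b l) :
    IsLaman V (insert s(u, w) E) ↔
      ¬ ∃ V' E', IsSubgraphOf V E V' E' ∧ IsLaman V' E' ∧ u ∈ V' ∧ w ∈ V' := by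
  obtain ⟨huwne, huV, hwV⟩ := step_props l {a,b} hl v u w hstep
  simp only [buildVerts] at hV
  simp only [buildEdges] at hE
  subst hV
  obtain ⟨Nd, End, Count, Bound⟩ := build_main l {a,b} {s(a,b)} hl
    (by intro e he; rw [Finset.mem_singleton] at he; subst he; simpa using hab)
    (by intro e he x hx
        rw [Finset.mem_singleton] at he; subst he
        rcases Sym2.mem_iff.1 hx with rfl | rfl <;> simp)
    (by rw [Finset.card_singleton, Finset.card_insert_of_notMem (by simpa using hab),
          Finset.card_singleton])
    (by intro V' E' hsub h2
        have := Finset.card_le_card hsub.2.1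
        rw [Finset.card_singleton] at this
        omega)
  rw [← hE] at Nd End Count Bound
  have hEc : E.card + 4 = 2 * (l.foldl (fun s p => insert p.1 s) ({a,b} : Finset α)).card := by
    rw [Finset.card_insert_of_notMem hbase] at Count
    omega
  have bigBound : ∀ V' E', IsSubgraphOf (l.foldl (fun s p => insert p.1 s) ({a,b} : Finset α))
      (insert s(a,b) E) V' E' → E'.card ≤ 2 * V'.card - 3 := by
    intro V' E' hsub
    rcases Nat.lt_or_ge V'.card 2 with h | h
    · rw [laman_small_empty _ _ Nd _ _ hsub (by omega)]
      simp
    · have := Bound _ _ hsub h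
      omega
  constructor
  · rintro hLam ⟨V', E', hsub, hLam', huV', hwV'⟩
    have hsubx : IsSubgraphOf (l.foldl (fun s p => insert p.1 s) ({a,b} : Finset α))
        (insert s(u,w) E) V' (insert s(u,w) E') := by
      refine ⟨hsub.1, Finset.insert_subset_insert _ hsub.2.1, ?_⟩
      intro e he x hx
      rcases Finset.mem_insert.1 he with rfl | he
      · rcases Sym2.mem_iff.1 hx with rfl | rfl
        exacts [huV', hwV']
      · exact hsub.2.2 e he x hx
    have hb := hLam.2 _ _ hsubx
    have hc := hLam'.1
    have huwE' : s(u,w) ∈ E' := by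
      by_contra hne
      rw [Finset.card_insert_of_notMem hne] at hb
      omega
    have huwE : s(u,w) ∈ E := hsub.2.1 huwE'
    have hins : insert s(u,w) E = E := Finset.insert_eq_self.2 huwE
    rw [hins] at hLam
    have := hLam.1
    omega
  · intro h
    have huwE : s(u,w) ∉ E := by
      intro hmem
      apply h
      refine ⟨{u,w}, {s(u,w)}, ⟨?_, by simpa using hmem, ?_⟩, laman_single u w huwne,
        by simp, by simp⟩
      · intro x hx
        rcases Finset.mem_insert.1 hx with rfl | hx
        · exact huV
        · rw [Finset.mem_singleton] at hx; subst hx; exact hwV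
      · intro e he x hx
        rw [Finset.mem_singleton] at he; subst he
        rcases Sym2.mem_iff.1 hx with rfl | rfl <;> simp
    constructor
    · rw [Finset.card_insert_of_notMem huwE]
      omega
    · intro V' E' hsub
      have NdX : ∀ e ∈ insert s(u,w) E, ¬ e.IsDiag := by
        intro e he
        rcases Finset.mem_insert.1 he with rfl | he
        · simpa using huwne
        · exact Nd _ (Finset.mem_insert_of_mem he)
      rcases Nat.lt_or_ge V'.card 2 with hsmall | h2
      · rw [laman_small_empty _ _ NdX _ _ hsub (by omega)]
        simp
      by_cases huwE' : s(u,w) ∈ E'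
      · have huV' : u ∈ V' := hsub.2.2 _ huwE' u (by simp)
        have hwV' : w ∈ V' := hsub.2.2 _ huwE' w (by simp)
        have hE''E : E'.erase s(u,w) ⊆ E := by
          intro e he
          rcases Finset.mem_insert.1 (hsub.2.1 (Finset.mem_of_mem_erase he)) with rfl | hh
          · exact absurd rfl (Finset.ne_of_mem_erase he)
          · exact hh
        have hsubE : ∀ e ∈ E'.erase s(u,w), ∀ x ∈ e, x ∈ V' :=
          fun e he x hx => hsub.2.2 e (Finset.mem_of_mem_erase he) x hx
        have hb'' := Bound V' (E'.erase s(u,w))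
          ⟨hsub.1, hE''E.trans (Finset.subset_insert _ _), hsubE⟩ h2
        have hne : (E'.erase s(u,w)).card + 3 ≠ 2 * V'.card := by
          intro heq
          apply h
          refine ⟨V', E'.erase s(u,w), ⟨hsub.1, hE''E, hsubE⟩, ⟨heq, ?_⟩, huV', hwV'⟩
          intro V2 E2 hsub2
          exact bigBound V2 E2 ⟨hsub2.1.trans hsub.1,
            hsub2.2.1.trans (hE''E.trans (Finset.subset_insert _ _)), hsub2.2.2⟩
        have hcarde : (E'.erase s(u,w)).card + 1 = E'.card := by
          rw [Finset.card_erase_of_mem huwE']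
          have := Finset.card_pos.2 ⟨_, huwE'⟩
          omega
        omega
      · have hEsub : E' ⊆ E := by
          intro e he
          rcases Finset.mem_insert.1 (hsub.2.1 he) with rfl | hh
          · exact absurd he huwE'
          · exact hh
        exact bigBound _ _ ⟨hsub.1, hEsub.trans (Finset.subset_insert _ _), hsub.2.2⟩
end

section
/- Every Henneberg-I graph is Triangle-decomposable. -/
open SimpleGraph

variable {α : Type*} [DecidableEq α]

lemma tri_aux (l : List (α × α × α)) :
    ∀ (S : Finset α) (E : Finset (Sym2 α)), ValidFrom S l → TriDecomp S E →
    (∀ e ∈ E, ∀ x ∈ e, x ∈ S) →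
    TriDecomp (l.foldl (fun s p => insert p.1 s) S)
      (l.foldl (fun s p => insert s(p.1, p.2.1) (insert s(p.1, p.2.2) s)) E) := by
  induction l with
  | nil => intro S E _ hT _; simpa using hT
  | cons p rest ih =>
    obtain ⟨v, u, w⟩ := p
    intro S E hval hT hE
    obtain ⟨hv, hu, hw, huw, hrest⟩ := hval
    have hvu : v ≠ u := fun h => hv (h ▸ hu)
    have hvw : v ≠ w := fun h => hv (h ▸ hw)
    simp only [List.foldl_cons]
    apply ih (insert v S) _ hrest
    · have hV : insert v S = S ∪ ({v, u} : Finset α) ∪ ({v, w} : Finset α) := by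
        ext x
        simp only [Finset.mem_insert, Finset.mem_union, Finset.mem_singleton]
        constructor
        · rintro (rfl | hx)
          · exact Or.inr (Or.inl rfl)
          · exact Or.inl (Or.inl hx)
        · rintro ((hx | h) | h)
          · exact Or.inr hx
          all_goals rcases h with rfl | rfl
          · exact Or.inl rfl
          · exact Or.inr hu
          · exact Or.inl rfl
          · exact Or.inr hw
      have hEeq : insert s(v, u) (insert s(v, w) E)
          = E ∪ ({s(v, u)} : Finset (Sym2 α)) ∪ ({s(v, w)} : Finset (Sym2 α)) := by
        ext e
        simp only [Finset.mem_insert, Finset.mem_union, Finset.mem_singleton]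
        tauto
      rw [hV, hEeq]
      refine TriDecomp.merge S {v, u} {v, w} E {s(v, u)} {s(v, w)} v w u hvw huw.symm hvu
        hT (TriDecomp.edge v u hvu) (TriDecomp.edge v w hvw) ?_ ?_ ?_ ?_ ?_ ?_
      · ext x
        simp only [Finset.mem_inter, Finset.mem_insert, Finset.mem_singleton]
        constructor
        · rintro ⟨hx, rfl | rfl⟩
          · exact absurd hx hv
          · rfl
        · rintro rfl; exact ⟨hu, Or.inr rfl⟩
      · ext x
        simp only [Finset.mem_inter, Finset.mem_insert, Finset.mem_singleton]
        constructor
        · rintro ⟨h1, h2⟩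
          rcases h1 with rfl | rfl
          · rfl
          · rcases h2 with rfl | rfl
            · exact absurd rfl hvu
            · exact absurd rfl huw
        · rintro rfl; exact ⟨Or.inl rfl, Or.inl rfl⟩
      · ext x
        simp only [Finset.mem_inter, Finset.mem_insert, Finset.mem_singleton]
        constructor
        · rintro ⟨hx, rfl | rfl⟩
          · exact absurd hx hv
          · rfl
        · rintro rfl; exact ⟨hw, Or.inr rfl⟩
      · ext e
        simp only [Finset.mem_inter, Finset.mem_singleton, Finset.notMem_empty, iff_false,
          not_and]
        rintro he rfl
        exact hv (hE _ he v (Sym2.mem_mk_left v u))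
      · apply Finset.singleton_inter_of_notMem
        simp only [Finset.mem_singleton, Sym2.eq, Sym2.rel_iff', Prod.mk.injEq, Prod.swap_prod_mk]
        push_neg
        exact ⟨fun _ => huw, fun h => absurd h hvw⟩
      · ext e
        simp only [Finset.mem_inter, Finset.mem_singleton, Finset.notMem_empty, iff_false,
          not_and]
        rintro he rfl
        exact hv (hE _ he v (Sym2.mem_mk_left v w))
    · intro e he x hx
      rcases Finset.mem_insert.mp he with rfl | he
      · rcases Sym2.mem_iff.mp hx with rfl | rfl
        · exact Finset.mem_insert_self _ _
        · exact Finset.mem_insert_of_mem hu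
      rcases Finset.mem_insert.mp he with rfl | he
      · rcases Sym2.mem_iff.mp hx with rfl | rfl
        · exact Finset.mem_insert_self _ _
        · exact Finset.mem_insert_of_mem hw
      · exact Finset.mem_insert_of_mem (hE e he x hx)

/-- Every Henneberg-I graph is Triangle-decomposable. -/
theorem stmt7 (V : Finset α) (E : Finset (Sym2 α)) (a b : α)
    (hG : IsHennebergI V E a b) :
    TriDecomp V E := by
  obtain ⟨hab, l, hval, hV, hE⟩ := hG
  subst hV hE
  apply tri_aux l {a, b} {s(a, b)} hval (TriDecomp.edge a b hab)
  intro e he x hx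
  rcases Finset.mem_singleton.mp he with rfl
  rcases Sym2.mem_iff.mp hx with rfl | rfl
  · exact Finset.mem_insert_self _ _
  · exact Finset.mem_insert_of_mem (Finset.mem_singleton_self _)
end

section
/- Adding a new vertex of degree 2 (adjacent to two existing vertices) to a Triangle-decomposable graph yields a Triangle-decomposable graph; conversely, deleting a vertex of degree 2 from a Triangle-decomposable graph with at least 3 vertices yields a Triangle-decomposable graph. -/
open SimpleGraph

variable {α : Type*} [DecidableEq α]

lemma TriDecomp.edges_mem {V : Finset α} {E : Finset (Sym2 α)} (hd : TriDecomp V E) :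
    ∀ e ∈ E, ∀ y ∈ e, y ∈ V := by
  induction hd with
  | edge u v h =>
    intro e he y hy
    simp only [Finset.mem_singleton] at he
    subst he
    rw [Sym2.mem_iff] at hy
    rcases hy with rfl | rfl <;> simp
  | triangle u v w huv hvw huw =>
    intro e he y hy
    simp only [Finset.mem_insert, Finset.mem_singleton] at he
    rcases he with rfl | rfl | rfl <;> rw [Sym2.mem_iff] at hy <;>
      rcases hy with rfl | rfl <;> simp
  | merge V1 V2 V3 E1 E2 E3 v1 v2 v3 h12 h23 h13 t1 t2 t3 i12 i23 i13 e12 e23 e13 ih1 ih2 ih3 =>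
    intro e he y hy
    simp only [Finset.mem_union] at he ⊢
    rcases he with (he | he) | he
    · exact Or.inl (Or.inl (ih1 e he y hy))
    · exact Or.inl (Or.inr (ih2 e he y hy))
    · exact Or.inr (ih3 e he y hy)

lemma degreeIn_zero {V : Finset α} {E : Finset (Sym2 α)} (hd : TriDecomp V E) {x : α}
    (hx : x ∉ V) : degreeIn E x = 0 := by
  rw [degreeIn, Finset.card_eq_zero, Finset.filter_eq_empty_iff]
  exact fun e he hxe => hx (hd.edges_mem e he x hxe)

lemma degreeIn_mono {E E' : Finset (Sym2 α)} (h : E' ⊆ E) (x : α) :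
    degreeIn E' x ≤ degreeIn E x :=
  Finset.card_le_card (Finset.filter_subset_filter _ h)

lemma degreeIn_union3 {E1 E2 E3 : Finset (Sym2 α)} (x : α)
    (e12 : E1 ∩ E2 = ∅) (e23 : E2 ∩ E3 = ∅) (e13 : E1 ∩ E3 = ∅) :
    degreeIn (E1 ∪ E2 ∪ E3) x = degreeIn E1 x + degreeIn E2 x + degreeIn E3 x := by
  have d12 : Disjoint E1 E2 := Finset.disjoint_iff_inter_eq_empty.2 e12
  have d23 : Disjoint E2 E3 := Finset.disjoint_iff_inter_eq_empty.2 e23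
  have d13 : Disjoint E1 E3 := Finset.disjoint_iff_inter_eq_empty.2 e13
  simp only [degreeIn, Finset.filter_union]
  rw [Finset.card_union_of_disjoint, Finset.card_union_of_disjoint]
  · exact Finset.disjoint_filter_filter d12
  · exact Finset.disjoint_union_left.2
      ⟨Finset.disjoint_filter_filter d13, Finset.disjoint_filter_filter d23⟩

lemma degreeIn_pos {V : Finset α} {E : Finset (Sym2 α)} (hd : TriDecomp V E) {x : α}
    (hx : x ∈ V) : 1 ≤ degreeIn E x := by
  induction hd with
  | edge u v h =>
    rw [Finset.mem_insert, Finset.mem_singleton] at hx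
    rw [degreeIn, Nat.succ_le_iff, Finset.card_pos]
    refine ⟨s(u, v), Finset.mem_filter.2 ⟨Finset.mem_singleton_self _, ?_⟩⟩
    rcases hx with rfl | rfl <;> simp
  | triangle u v w huv hvw huw =>
    simp only [Finset.mem_insert, Finset.mem_singleton] at hx
    rw [degreeIn, Nat.succ_le_iff, Finset.card_pos]
    rcases hx with rfl | rfl | rfl
    · exact ⟨s(x, v), Finset.mem_filter.2 ⟨by simp, by simp⟩⟩
    · exact ⟨s(u, x), Finset.mem_filter.2 ⟨by simp, by simp⟩⟩
    · exact ⟨s(u, x), Finset.mem_filter.2 ⟨by simp, by simp⟩⟩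
  | merge V1 V2 V3 E1 E2 E3 v1 v2 v3 h12 h23 h13 t1 t2 t3 i12 i23 i13 e12 e23 e13 ih1 ih2 ih3 =>
    simp only [Finset.mem_union] at hx
    rcases hx with (hx | hx) | hx
    · exact le_trans (ih1 hx) (degreeIn_mono (by intro e; simp +contextual [Finset.mem_union]) x)
    · exact le_trans (ih2 hx) (degreeIn_mono (by intro e; simp +contextual [Finset.mem_union]) x)
    · exact le_trans (ih3 hx) (degreeIn_mono (by intro e; simp +contextual [Finset.mem_union]) x)

lemma triangle_deg_ge {u v w x : α} (huv : u ≠ v) (hvw : v ≠ w) (huw : u ≠ w)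
    (hx : x ∈ ({u, v, w} : Finset α)) :
    2 ≤ degreeIn ({s(u, v), s(v, w), s(u, w)} : Finset (Sym2 α)) x := by
  simp only [Finset.mem_insert, Finset.mem_singleton] at hx
  rw [degreeIn, ← Nat.lt_iff_add_one_le, Finset.one_lt_card]
  rcases hx with rfl | rfl | rfl
  · exact ⟨s(x, v), Finset.mem_filter.2 ⟨by simp, by simp⟩,
      s(x, w), Finset.mem_filter.2 ⟨by simp, by simp⟩, by simp [Sym2.eq_iff]; tauto⟩
  · exact ⟨s(u, x), Finset.mem_filter.2 ⟨by simp, by simp⟩,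
      s(x, w), Finset.mem_filter.2 ⟨by simp, by simp⟩, by simp [Sym2.eq_iff]; tauto⟩
  · exact ⟨s(v, x), Finset.mem_filter.2 ⟨by simp, by simp⟩,
      s(u, x), Finset.mem_filter.2 ⟨by simp, by simp⟩, by simp [Sym2.eq_iff]; tauto⟩

lemma deg_one {V : Finset α} {E : Finset (Sym2 α)} (hd : TriDecomp V E) {x : α}
    (hx : x ∈ V) (h1 : degreeIn E x = 1) :
    ∃ y, x ≠ y ∧ V = {x, y} ∧ E = {s(x, y)} := by
  induction hd with
  | edge u v h =>
    rw [Finset.mem_insert, Finset.mem_singleton] at hx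
    rcases hx with rfl | rfl
    · exact ⟨v, h, rfl, rfl⟩
    · exact ⟨u, h.symm, Finset.pair_comm u x, by rw [Sym2.eq_swap]⟩
  | triangle u v w huv hvw huw =>
    have := triangle_deg_ge huv hvw huw hx
    omega
  | merge V1 V2 V3 E1 E2 E3 v1 v2 v3 h12 h23 h13 t1 t2 t3 i12 i23 i13 e12 e23 e13 ih1 ih2 ih3 =>
    have hadd := degreeIn_union3 x e12 e23 e13
    rw [h1] at hadd
    have hv3_1 : v3 ∈ V1 := Finset.mem_of_mem_inter_left (i12 ▸ Finset.mem_singleton_self v3)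
    have hv3_2 : v3 ∈ V2 := Finset.mem_of_mem_inter_right (i12 ▸ Finset.mem_singleton_self v3)
    have hv1_2 : v1 ∈ V2 := Finset.mem_of_mem_inter_left (i23 ▸ Finset.mem_singleton_self v1)
    have hv1_3 : v1 ∈ V3 := Finset.mem_of_mem_inter_right (i23 ▸ Finset.mem_singleton_self v1)
    have hv2_1 : v2 ∈ V1 := Finset.mem_of_mem_inter_left (i13 ▸ Finset.mem_singleton_self v2)
    have hv2_3 : v2 ∈ V3 := Finset.mem_of_mem_inter_right (i13 ▸ Finset.mem_singleton_self v2)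
    have key : ∀ {W1 W2 : Finset α} {F1 F2 : Finset (Sym2 α)},
        TriDecomp W1 F1 → TriDecomp W2 F2 → x ∈ W1 → x ∈ W2 →
        ¬ (degreeIn F1 x + degreeIn F2 x ≤ 1) := fun hA hB hxA hxB h => by
      have := degreeIn_pos hA hxA
      have := degreeIn_pos hB hxB
      omega
    have honly : (x ∈ V1 ∧ x ∉ V2 ∧ x ∉ V3) ∨ (x ∈ V2 ∧ x ∉ V1 ∧ x ∉ V3) ∨
        (x ∈ V3 ∧ x ∉ V1 ∧ x ∉ V2) := by
      simp only [Finset.mem_union] at hx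
      by_cases h1' : x ∈ V1 <;> by_cases h2' : x ∈ V2 <;> by_cases h3' : x ∈ V3
      · exact absurd (by omega) (key t1 t2 h1' h2')
      · exact absurd (by omega) (key t1 t2 h1' h2')
      · exact absurd (by omega) (key t1 t3 h1' h3')
      · exact Or.inl ⟨h1', h2', h3'⟩
      · exact absurd (by omega) (key t2 t3 h2' h3')
      · exact Or.inr (Or.inl ⟨h2', h1', h3'⟩)
      · exact Or.inr (Or.inr ⟨h3', h1', h2'⟩)
      · tauto
    rcases honly with ⟨ha, hb, hc⟩ | ⟨ha, hb, hc⟩ | ⟨ha, hb, hc⟩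
    · have hz2 := degreeIn_zero t2 hb
      have hz3 := degreeIn_zero t3 hc
      obtain ⟨y, hxy, hV, hE⟩ := ih1 ha (by omega)
      exfalso
      have hx2 : x ≠ v3 := fun h => hb (h ▸ hv3_2)
      have hx3 : x ≠ v2 := fun h => hc (h ▸ hv2_3)
      have e2 : v2 = y := by
        have := hv2_1; rw [hV, Finset.mem_insert, Finset.mem_singleton] at this
        rcases this with h | h
        · exact absurd h.symm hx3
        · exact h
      have e3 : v3 = y := by
        have := hv3_1; rw [hV, Finset.mem_insert, Finset.mem_singleton] at this
        rcases this with h | h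
        · exact absurd h.symm hx2
        · exact h
      exact h23 (e2.trans e3.symm)
    · have hz1 := degreeIn_zero t1 hb
      have hz3 := degreeIn_zero t3 hc
      obtain ⟨y, hxy, hV, hE⟩ := ih2 ha (by omega)
      exfalso
      have hx2 : x ≠ v3 := fun h => hb (h ▸ hv3_1)
      have hx3 : x ≠ v1 := fun h => hc (h ▸ hv1_3)
      have e2 : v1 = y := by
        have := hv1_2; rw [hV, Finset.mem_insert, Finset.mem_singleton] at this
        rcases this with h | h
        · exact absurd h.symm hx3
        · exact h
      have e3 : v3 = y := by
        have := hv3_2; rw [hV, Finset.mem_insert, Finset.mem_singleton] at this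
        rcases this with h | h
        · exact absurd h.symm hx2
        · exact h
      exact h13 (e2.trans e3.symm)
    · have hz1 := degreeIn_zero t1 hb
      have hz2 := degreeIn_zero t2 hc
      obtain ⟨y, hxy, hV, hE⟩ := ih3 ha (by omega)
      exfalso
      have hx2 : x ≠ v2 := fun h => hb (h ▸ hv2_1)
      have hx3 : x ≠ v1 := fun h => hc (h ▸ hv1_2)
      have e2 : v1 = y := by
        have := hv1_3; rw [hV, Finset.mem_insert, Finset.mem_singleton] at this
        rcases this with h | h
        · exact absurd h.symm hx3
        · exact h
      have e3 : v2 = y := by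
        have := hv2_3; rw [hV, Finset.mem_insert, Finset.mem_singleton] at this
        rcases this with h | h
        · exact absurd h.symm hx2
        · exact h
      exact h12 (e3.trans e2.symm).symm

lemma card_lt_three {V : Finset α} {E : Finset (Sym2 α)} (hd : TriDecomp V E)
    (hc : V.card < 3) : ∃ u v, u ≠ v ∧ V = {u, v} ∧ E = {s(u, v)} := by
  induction hd with
  | edge u v h => exact ⟨u, v, h, rfl, rfl⟩
  | triangle u v w huv hvw huw =>
    exfalso
    have : ({u, v, w} : Finset α).card = 3 :=
      Finset.card_eq_three.2 ⟨u, v, w, huv, huw, hvw, rfl⟩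
    omega
  | merge V1 V2 V3 E1 E2 E3 v1 v2 v3 h12 h23 h13 t1 t2 t3 i12 i23 i13 e12 e23 e13 ih1 ih2 ih3 =>
    exfalso
    have hv3_1 : v3 ∈ V1 := Finset.mem_of_mem_inter_left (i12 ▸ Finset.mem_singleton_self v3)
    have hv1_2 : v1 ∈ V2 := Finset.mem_of_mem_inter_left (i23 ▸ Finset.mem_singleton_self v1)
    have hv2_3 : v2 ∈ V3 := Finset.mem_of_mem_inter_right (i13 ▸ Finset.mem_singleton_self v2)
    have hsub : ({v1, v2, v3} : Finset α) ⊆ V1 ∪ V2 ∪ V3 := by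
      intro y hy
      simp only [Finset.mem_insert, Finset.mem_singleton] at hy
      simp only [Finset.mem_union]
      rcases hy with rfl | rfl | rfl
      · exact Or.inl (Or.inr hv1_2)
      · exact Or.inr hv2_3
      · exact Or.inl (Or.inl hv3_1)
    have h3 : ({v1, v2, v3} : Finset α).card = 3 :=
      Finset.card_eq_three.2 ⟨v1, v2, v3, h12, h13, h23, rfl⟩
    have := Finset.card_le_card hsub
    omega

lemma filter_not_mem_eq {V : Finset α} {E : Finset (Sym2 α)} (hd : TriDecomp V E) {x : α}
    (hx : x ∉ V) : E.filter (fun e => x ∉ e) = E :=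
  Finset.filter_true_of_mem (fun e he hxe => hx (hd.edges_mem e he x hxe))

lemma erase_triple {u v w : α} (huv : u ≠ v) (hvw : v ≠ w) (huw : u ≠ w) :
    ({u, v, w} : Finset α).erase u = {v, w} ∧
    ({u, v, w} : Finset α).erase v = {u, w} ∧
    ({u, v, w} : Finset α).erase w = {u, v} := by
  refine ⟨?_, ?_, ?_⟩ <;> ext y <;>
    simp only [Finset.mem_erase, Finset.mem_insert, Finset.mem_singleton] <;>
    constructor
  · rintro ⟨h, rfl | rfl | rfl⟩ <;> tauto
  · rintro (rfl | rfl) <;> exact ⟨by tauto, by tauto⟩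
  · rintro ⟨h, rfl | rfl | rfl⟩ <;> tauto
  · rintro (rfl | rfl) <;> exact ⟨by tauto, by tauto⟩
  · rintro ⟨h, rfl | rfl | rfl⟩ <;> tauto
  · rintro (rfl | rfl) <;> exact ⟨by tauto, by tauto⟩

lemma delete_deg_two {V : Finset α} {E : Finset (Sym2 α)} (hd : TriDecomp V E) {x : α}
    (hx : x ∈ V) (hcard : 3 ≤ V.card) (hdeg : degreeIn E x = 2) :
    TriDecomp (V.erase x) (E.filter (fun e => x ∉ e)) := by
  induction hd with
  | edge u v h =>
    exfalso
    have : ({u, v} : Finset α).card ≤ 2 :=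
      le_trans (Finset.card_insert_le u {v}) (by simp)
    omega
  | triangle u v w huv hvw huw =>
    obtain ⟨er1, er2, er3⟩ := erase_triple huv hvw huw
    simp only [Finset.mem_insert, Finset.mem_singleton] at hx
    rcases hx with rfl | rfl | rfl
    · rw [er1]
      have hE : ({s(x, v), s(v, w), s(x, w)} : Finset (Sym2 α)).filter (fun e => x ∉ e)
          = {s(v, w)} := by
        rw [Finset.filter_insert, Finset.filter_insert, Finset.filter_singleton]
        simp [Sym2.mem_iff, huv.symm, huw.symm, Ne.symm]
      rw [hE]
      exact TriDecomp.edge v w hvw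
    · rw [er2]
      have hE : ({s(u, x), s(x, w), s(u, w)} : Finset (Sym2 α)).filter (fun e => x ∉ e)
          = {s(u, w)} := by
        rw [Finset.filter_insert, Finset.filter_insert, Finset.filter_singleton]
        simp [Sym2.mem_iff, huv, hvw, Ne.symm]
      rw [hE]
      exact TriDecomp.edge u w huw
    · rw [er3]
      have hE : ({s(u, v), s(v, x), s(u, x)} : Finset (Sym2 α)).filter (fun e => x ∉ e)
          = {s(u, v)} := by
        rw [Finset.filter_insert, Finset.filter_insert, Finset.filter_singleton]
        simp [Sym2.mem_iff, hvw, huw, Ne.symm]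
      rw [hE]
      exact TriDecomp.edge u v huv
  | merge V1 V2 V3 E1 E2 E3 v1 v2 v3 h12 h23 h13 t1 t2 t3 i12 i23 i13 e12 e23 e13 ih1 ih2 ih3 =>
    have hv3_1 : v3 ∈ V1 := Finset.mem_of_mem_inter_left (i12 ▸ Finset.mem_singleton_self v3)
    have hv3_2 : v3 ∈ V2 := Finset.mem_of_mem_inter_right (i12 ▸ Finset.mem_singleton_self v3)
    have hv1_2 : v1 ∈ V2 := Finset.mem_of_mem_inter_left (i23 ▸ Finset.mem_singleton_self v1)
    have hv1_3 : v1 ∈ V3 := Finset.mem_of_mem_inter_right (i23 ▸ Finset.mem_singleton_self v1)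
    have hv2_1 : v2 ∈ V1 := Finset.mem_of_mem_inter_left (i13 ▸ Finset.mem_singleton_self v2)
    have hv2_3 : v2 ∈ V3 := Finset.mem_of_mem_inter_right (i13 ▸ Finset.mem_singleton_self v2)
    have hadd := degreeIn_union3 x e12 e23 e13
    rw [hdeg] at hadd
    by_cases m1 : x ∈ V1 <;> by_cases m2 : x ∈ V2 <;> by_cases m3 : x ∈ V3
    · -- TTT : impossible
      have q1 : x = v3 := Finset.mem_singleton.1 (i12 ▸ Finset.mem_inter.2 ⟨m1, m2⟩)
      have q2 : x = v1 := Finset.mem_singleton.1 (i23 ▸ Finset.mem_inter.2 ⟨m2, m3⟩)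
      exact absurd (q2.symm.trans q1) h13
    · -- TTF : x = v3, result is t3
      have hxv : x = v3 := Finset.mem_singleton.1 (i12 ▸ Finset.mem_inter.2 ⟨m1, m2⟩)
      have d1 := degreeIn_pos t1 m1
      have d2 := degreeIn_pos t2 m2
      have dz3 := degreeIn_zero t3 m3
      obtain ⟨y1, hxy1, hV1, hE1⟩ := deg_one t1 m1 (by omega)
      obtain ⟨y2, hxy2, hV2, hE2⟩ := deg_one t2 m2 (by omega)
      have hy1 : y1 = v2 := by
        have := hv2_1; rw [hV1, Finset.mem_insert, Finset.mem_singleton] at this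
        rcases this with h | h
        · exact absurd (h.trans hxv) h23
        · exact h.symm
      have hy2 : y2 = v1 := by
        have := hv1_2; rw [hV2, Finset.mem_insert, Finset.mem_singleton] at this
        rcases this with h | h
        · exact absurd (h.trans hxv) h13
        · exact h.symm
      subst hy1; subst hy2
      have hVeq : (V1 ∪ V2 ∪ V3).erase x = V3 := by
        ext y
        simp only [Finset.mem_erase, Finset.mem_union, hV1, hV2, Finset.mem_insert,
          Finset.mem_singleton]
        constructor
        · rintro ⟨hyx, ((rfl | rfl) | (rfl | rfl)) | h⟩
          · exact absurd rfl hyx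
          · exact hv2_3
          · exact absurd rfl hyx
          · exact hv1_3
          · exact h
        · intro h
          exact ⟨fun hh => m3 (hh ▸ h), Or.inr h⟩
      have hf1 : E1.filter (fun e => x ∉ e) = ∅ := by
        rw [hE1, Finset.filter_singleton]; simp
      have hf2 : E2.filter (fun e => x ∉ e) = ∅ := by
        rw [hE2, Finset.filter_singleton]; simp
      have hEeq : (E1 ∪ E2 ∪ E3).filter (fun e => x ∉ e) = E3 := by
        rw [Finset.filter_union, Finset.filter_union, filter_not_mem_eq t3 m3, hf1, hf2]
        simp
      rw [hVeq, hEeq]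
      exact t3
    · -- TFT : x = v2, result is t2
      have hxv : x = v2 := Finset.mem_singleton.1 (i13 ▸ Finset.mem_inter.2 ⟨m1, m3⟩)
      have d1 := degreeIn_pos t1 m1
      have d3 := degreeIn_pos t3 m3
      have dz2 := degreeIn_zero t2 m2
      obtain ⟨y1, hxy1, hV1, hE1⟩ := deg_one t1 m1 (by omega)
      obtain ⟨y3, hxy3, hV3, hE3⟩ := deg_one t3 m3 (by omega)
      have hy1 : y1 = v3 := by
        have := hv3_1; rw [hV1, Finset.mem_insert, Finset.mem_singleton] at this
        rcases this with h | h
        · exact absurd (h.trans hxv).symm h23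
        · exact h.symm
      have hy3 : y3 = v1 := by
        have := hv1_3; rw [hV3, Finset.mem_insert, Finset.mem_singleton] at this
        rcases this with h | h
        · exact absurd (h.trans hxv) h12
        · exact h.symm
      subst hy1; subst hy3
      have hVeq : (V1 ∪ V2 ∪ V3).erase x = V2 := by
        ext y
        simp only [Finset.mem_erase, Finset.mem_union, hV1, hV3, Finset.mem_insert,
          Finset.mem_singleton]
        constructor
        · rintro ⟨hyx, ((rfl | rfl) | h) | (rfl | rfl)⟩
          · exact absurd rfl hyx
          · exact hv3_2
          · exact h
          · exact absurd rfl hyx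
          · exact hv1_2
        · intro h
          exact ⟨fun hh => m2 (hh ▸ h), Or.inl (Or.inr h)⟩
      have hf1 : E1.filter (fun e => x ∉ e) = ∅ := by
        rw [hE1, Finset.filter_singleton]; simp
      have hf3 : E3.filter (fun e => x ∉ e) = ∅ := by
        rw [hE3, Finset.filter_singleton]; simp
      have hEeq : (E1 ∪ E2 ∪ E3).filter (fun e => x ∉ e) = E2 := by
        rw [Finset.filter_union, Finset.filter_union, filter_not_mem_eq t2 m2, hf1, hf3]
        simp
      rw [hVeq, hEeq]
      exact t2
    · -- TFF : x only in V1
      have dz2 := degreeIn_zero t2 m2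
      have dz3 := degreeIn_zero t3 m3
      have hd1 : degreeIn E1 x = 2 := by omega
      have hc1 : 3 ≤ V1.card := by
        by_contra hlt
        obtain ⟨u, v', huv, hV1, hE1⟩ := card_lt_three t1 (by omega)
        have hle : degreeIn E1 x ≤ 1 := by
          rw [hE1, degreeIn]
          exact le_trans (Finset.card_filter_le _ _) (by simp)
        omega
      have td := ih1 m1 hc1 hd1
      have hx3 : x ≠ v3 := fun h => m2 (h ▸ hv3_2)
      have hx2 : x ≠ v2 := fun h => m3 (h ▸ hv2_3)
      have i12' : (V1.erase x) ∩ V2 = {v3} := by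
        rw [Finset.erase_inter, i12, Finset.erase_eq_of_notMem (by simp [hx3])]
      have i13' : (V1.erase x) ∩ V3 = {v2} := by
        rw [Finset.erase_inter, i13, Finset.erase_eq_of_notMem (by simp [hx2])]
      have e12' : (E1.filter (fun e => x ∉ e)) ∩ E2 = ∅ :=
        Finset.subset_empty.1 (e12 ▸
          Finset.inter_subset_inter (Finset.filter_subset _ _) (Finset.Subset.refl _))
      have e13' : (E1.filter (fun e => x ∉ e)) ∩ E3 = ∅ :=
        Finset.subset_empty.1 (e13 ▸
          Finset.inter_subset_inter (Finset.filter_subset _ _) (Finset.Subset.refl _))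
      have hVeq : (V1 ∪ V2 ∪ V3).erase x = (V1.erase x) ∪ V2 ∪ V3 := by
        ext y
        simp only [Finset.mem_erase, Finset.mem_union]
        constructor
        · rintro ⟨hyx, h⟩
          rcases h with (h | h) | h
          · exact Or.inl (Or.inl ⟨hyx, h⟩)
          · exact Or.inl (Or.inr h)
          · exact Or.inr h
        · rintro ((⟨hyx, h⟩ | h) | h)
          · exact ⟨hyx, Or.inl (Or.inl h)⟩
          · exact ⟨fun hh => m2 (hh ▸ h), Or.inl (Or.inr h)⟩
          · exact ⟨fun hh => m3 (hh ▸ h), Or.inr h⟩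
      have hEeq : (E1 ∪ E2 ∪ E3).filter (fun e => x ∉ e)
          = (E1.filter (fun e => x ∉ e)) ∪ E2 ∪ E3 := by
        rw [Finset.filter_union, Finset.filter_union, filter_not_mem_eq t2 m2,
          filter_not_mem_eq t3 m3]
      rw [hVeq, hEeq]
      exact TriDecomp.merge _ V2 V3 _ E2 E3 v1 v2 v3 h12 h23 h13 td t2 t3 i12' i23 i13'
        e12' e23 e13'
    · -- FTT : x = v1, result is t1
      have hxv : x = v1 := Finset.mem_singleton.1 (i23 ▸ Finset.mem_inter.2 ⟨m2, m3⟩)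
      have d2 := degreeIn_pos t2 m2
      have d3 := degreeIn_pos t3 m3
      have dz1 := degreeIn_zero t1 m1
      obtain ⟨y2, hxy2, hV2, hE2⟩ := deg_one t2 m2 (by omega)
      obtain ⟨y3, hxy3, hV3, hE3⟩ := deg_one t3 m3 (by omega)
      have hy2 : y2 = v3 := by
        have := hv3_2; rw [hV2, Finset.mem_insert, Finset.mem_singleton] at this
        rcases this with h | h
        · exact absurd (h.trans hxv).symm h13
        · exact h.symm
      have hy3 : y3 = v2 := by
        have := hv2_3; rw [hV3, Finset.mem_insert, Finset.mem_singleton] at this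
        rcases this with h | h
        · exact absurd (h.trans hxv).symm h12
        · exact h.symm
      subst hy2; subst hy3
      have hVeq : (V1 ∪ V2 ∪ V3).erase x = V1 := by
        ext y
        simp only [Finset.mem_erase, Finset.mem_union, hV2, hV3, Finset.mem_insert,
          Finset.mem_singleton]
        constructor
        · rintro ⟨hyx, (h | (rfl | rfl)) | (rfl | rfl)⟩
          · exact h
          · exact absurd rfl hyx
          · exact hv3_1
          · exact absurd rfl hyx
          · exact hv2_1
        · intro h
          exact ⟨fun hh => m1 (hh ▸ h), Or.inl (Or.inl h)⟩
      have hf2 : E2.filter (fun e => x ∉ e) = ∅ := by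
        rw [hE2, Finset.filter_singleton]; simp
      have hf3 : E3.filter (fun e => x ∉ e) = ∅ := by
        rw [hE3, Finset.filter_singleton]; simp
      have hEeq : (E1 ∪ E2 ∪ E3).filter (fun e => x ∉ e) = E1 := by
        rw [Finset.filter_union, Finset.filter_union, filter_not_mem_eq t1 m1, hf2, hf3]
        simp
      rw [hVeq, hEeq]
      exact t1
    · -- FTF : x only in V2
      have dz1 := degreeIn_zero t1 m1
      have dz3 := degreeIn_zero t3 m3
      have hd2 : degreeIn E2 x = 2 := by omega
      have hc2 : 3 ≤ V2.card := by
        by_contra hlt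
        obtain ⟨u, v', huv, hV2, hE2⟩ := card_lt_three t2 (by omega)
        have hle : degreeIn E2 x ≤ 1 := by
          rw [hE2, degreeIn]
          exact le_trans (Finset.card_filter_le _ _) (by simp)
        omega
      have td := ih2 m2 hc2 hd2
      have hx3 : x ≠ v3 := fun h => m1 (h ▸ hv3_1)
      have hx1 : x ≠ v1 := fun h => m3 (h ▸ hv1_3)
      have i12' : V1 ∩ (V2.erase x) = {v3} := by
        rw [Finset.inter_erase, i12, Finset.erase_eq_of_notMem (by simp [hx3])]
      have i23' : (V2.erase x) ∩ V3 = {v1} := by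
        rw [Finset.erase_inter, i23, Finset.erase_eq_of_notMem (by simp [hx1])]
      have e12' : E1 ∩ (E2.filter (fun e => x ∉ e)) = ∅ :=
        Finset.subset_empty.1 (e12 ▸
          Finset.inter_subset_inter (Finset.Subset.refl _) (Finset.filter_subset _ _))
      have e23' : (E2.filter (fun e => x ∉ e)) ∩ E3 = ∅ :=
        Finset.subset_empty.1 (e23 ▸
          Finset.inter_subset_inter (Finset.filter_subset _ _) (Finset.Subset.refl _))
      have hVeq : (V1 ∪ V2 ∪ V3).erase x = V1 ∪ (V2.erase x) ∪ V3 := by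
        ext y
        simp only [Finset.mem_erase, Finset.mem_union]
        constructor
        · rintro ⟨hyx, h⟩
          rcases h with (h | h) | h
          · exact Or.inl (Or.inl h)
          · exact Or.inl (Or.inr ⟨hyx, h⟩)
          · exact Or.inr h
        · rintro ((h | ⟨hyx, h⟩) | h)
          · exact ⟨fun hh => m1 (hh ▸ h), Or.inl (Or.inl h)⟩
          · exact ⟨hyx, Or.inl (Or.inr h)⟩
          · exact ⟨fun hh => m3 (hh ▸ h), Or.inr h⟩
      have hEeq : (E1 ∪ E2 ∪ E3).filter (fun e => x ∉ e)
          = E1 ∪ (E2.filter (fun e => x ∉ e)) ∪ E3 := by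
        rw [Finset.filter_union, Finset.filter_union, filter_not_mem_eq t1 m1,
          filter_not_mem_eq t3 m3]
      rw [hVeq, hEeq]
      exact TriDecomp.merge V1 _ V3 E1 _ E3 v1 v2 v3 h12 h23 h13 t1 td t3 i12' i23' i13
        e12' e23' e13
    · -- FFT : x only in V3
      have dz1 := degreeIn_zero t1 m1
      have dz2 := degreeIn_zero t2 m2
      have hd3 : degreeIn E3 x = 2 := by omega
      have hc3 : 3 ≤ V3.card := by
        by_contra hlt
        obtain ⟨u, v', huv, hV3, hE3⟩ := card_lt_three t3 (by omega)
        have hle : degreeIn E3 x ≤ 1 := by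
          rw [hE3, degreeIn]
          exact le_trans (Finset.card_filter_le _ _) (by simp)
        omega
      have td := ih3 m3 hc3 hd3
      have hx1 : x ≠ v1 := fun h => m2 (h ▸ hv1_2)
      have hx2 : x ≠ v2 := fun h => m1 (h ▸ hv2_1)
      have i23' : V2 ∩ (V3.erase x) = {v1} := by
        rw [Finset.inter_erase, i23, Finset.erase_eq_of_notMem (by simp [hx1])]
      have i13' : V1 ∩ (V3.erase x) = {v2} := by
        rw [Finset.inter_erase, i13, Finset.erase_eq_of_notMem (by simp [hx2])]
      have e23' : E2 ∩ (E3.filter (fun e => x ∉ e)) = ∅ :=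
        Finset.subset_empty.1 (e23 ▸
          Finset.inter_subset_inter (Finset.Subset.refl _) (Finset.filter_subset _ _))
      have e13' : E1 ∩ (E3.filter (fun e => x ∉ e)) = ∅ :=
        Finset.subset_empty.1 (e13 ▸
          Finset.inter_subset_inter (Finset.Subset.refl _) (Finset.filter_subset _ _))
      have hVeq : (V1 ∪ V2 ∪ V3).erase x = V1 ∪ V2 ∪ (V3.erase x) := by
        ext y
        simp only [Finset.mem_erase, Finset.mem_union]
        constructor
        · rintro ⟨hyx, h⟩
          rcases h with (h | h) | h
          · exact Or.inl (Or.inl h)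
          · exact Or.inl (Or.inr h)
          · exact Or.inr ⟨hyx, h⟩
        · rintro ((h | h) | ⟨hyx, h⟩)
          · exact ⟨fun hh => m1 (hh ▸ h), Or.inl (Or.inl h)⟩
          · exact ⟨fun hh => m2 (hh ▸ h), Or.inl (Or.inr h)⟩
          · exact ⟨hyx, Or.inr h⟩
      have hEeq : (E1 ∪ E2 ∪ E3).filter (fun e => x ∉ e)
          = E1 ∪ E2 ∪ (E3.filter (fun e => x ∉ e)) := by
        rw [Finset.filter_union, Finset.filter_union, filter_not_mem_eq t1 m1,
          filter_not_mem_eq t2 m2]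
      rw [hVeq, hEeq]
      exact TriDecomp.merge V1 V2 _ E1 E2 _ v1 v2 v3 h12 h23 h13 t1 t2 td i12 i23' i13'
        e12 e23' e13'
    · -- FFF : impossible
      rw [Finset.mem_union, Finset.mem_union] at hx
      tauto

lemma add_deg_two {V : Finset α} {E : Finset (Sym2 α)} (hd : TriDecomp V E)
    (v u w : α) (hv : v ∉ V) (hu : u ∈ V) (hw : w ∈ V) (huw : u ≠ w) :
    TriDecomp (insert v V) (insert s(v, u) (insert s(v, w) E)) := by
  have hvu : v ≠ u := fun h => hv (h ▸ hu)
  have hvw : v ≠ w := fun h => hv (h ▸ hw)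
  have hne : s(v, u) ∉ E := fun h => hv (hd.edges_mem _ h v (by simp))
  have hnw : s(v, w) ∉ E := fun h => hv (hd.edges_mem _ h v (by simp))
  have hVeq : insert v V = V ∪ {v, u} ∪ {v, w} := by
    ext y
    simp only [Finset.mem_insert, Finset.mem_union, Finset.mem_singleton]
    constructor
    · rintro (rfl | h)
      · exact Or.inl (Or.inr (Or.inl rfl))
      · exact Or.inl (Or.inl h)
    · rintro ((h | (rfl | rfl)) | (rfl | rfl))
      · exact Or.inr h
      · exact Or.inl rfl
      · exact Or.inr hu
      · exact Or.inl rfl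
      · exact Or.inr hw
  have hEeq : insert s(v, u) (insert s(v, w) E) = E ∪ {s(v, u)} ∪ {s(v, w)} := by
    ext e
    simp only [Finset.mem_insert, Finset.mem_union, Finset.mem_singleton]
    tauto
  have i12 : V ∩ {v, u} = {u} := by
    ext y
    simp only [Finset.mem_inter, Finset.mem_insert, Finset.mem_singleton]
    constructor
    · rintro ⟨h, rfl | rfl⟩
      · exact absurd h hv
      · rfl
    · rintro rfl; exact ⟨hu, Or.inr rfl⟩
  have i13 : V ∩ {v, w} = {w} := by
    ext y
    simp only [Finset.mem_inter, Finset.mem_insert, Finset.mem_singleton]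
    constructor
    · rintro ⟨h, rfl | rfl⟩
      · exact absurd h hv
      · rfl
    · rintro rfl; exact ⟨hw, Or.inr rfl⟩
  have i23 : ({v, u} : Finset α) ∩ {v, w} = {v} := by
    ext y
    simp only [Finset.mem_inter, Finset.mem_insert, Finset.mem_singleton]
    constructor
    · rintro ⟨h1 | h1, h2 | h2⟩
      · exact h1
      · exact h1
      · exact h2
      · exact absurd (h1.symm.trans h2) huw
    · rintro rfl; exact ⟨Or.inl rfl, Or.inl rfl⟩
  have hdiff : s(v, u) ≠ s(v, w) := by
    intro h
    rw [Sym2.eq_iff] at h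
    rcases h with ⟨-, h⟩ | ⟨h, -⟩
    · exact huw h
    · exact hvw h
  have e12 : E ∩ ({s(v, u)} : Finset (Sym2 α)) = ∅ := by
    apply Finset.eq_empty_of_forall_notMem
    intro e he
    rw [Finset.mem_inter, Finset.mem_singleton] at he
    exact hne (he.2 ▸ he.1)
  have e13 : E ∩ ({s(v, w)} : Finset (Sym2 α)) = ∅ := by
    apply Finset.eq_empty_of_forall_notMem
    intro e he
    rw [Finset.mem_inter, Finset.mem_singleton] at he
    exact hnw (he.2 ▸ he.1)
  have e23 : ({s(v, u)} : Finset (Sym2 α)) ∩ {s(v, w)} = ∅ := by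
    apply Finset.eq_empty_of_forall_notMem
    intro e he
    rw [Finset.mem_inter, Finset.mem_singleton, Finset.mem_singleton] at he
    exact hdiff (he.1.symm.trans he.2)
  rw [hVeq, hEeq]
  exact TriDecomp.merge V {v, u} {v, w} E {s(v, u)} {s(v, w)} v w u
    hvw huw.symm hvu hd (TriDecomp.edge v u hvu) (TriDecomp.edge v w hvw)
    i12 i23 i13 e12 e23 e13


/-- Adding a new degree-2 vertex to a Triangle-decomposable graph yields a
Triangle-decomposable graph; conversely, deleting a degree-2 vertex from a
Triangle-decomposable graph with at least 3 vertices yields a Triangle-decomposable graph. -/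
theorem stmt8 (V : Finset α) (E : Finset (Sym2 α)) (hd : TriDecomp V E) :
    (∀ v u w : α, v ∉ V → u ∈ V → w ∈ V → u ≠ w →
      TriDecomp (insert v V) (insert s(v, u) (insert s(v, w) E))) ∧
    (∀ v ∈ V, 3 ≤ V.card → degreeIn E v = 2 →
      TriDecomp (V.erase v) (E.filter (fun e => v ∉ e))) :=
  ⟨fun v u w hv hu hw huw => add_deg_two hd v u w hv hu hw huw,
   fun v hv h3 hdeg => delete_deg_two hd hv h3 hdeg⟩
end

section
/- Let G be a 1-path simple 1-dof Henneberg-I graph with base non-edge (v1, v2). If at least three vertices are constructed directly on the base pair v1, v2 (i.e., at least three vertices are adjacent to both v1 and v2 as their construction base), then G has a K_{3,3} minor. -/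
/-!
A step `(v, u, w)` of the construction adds a new vertex `v` joined to the anchors `u` and `w`.
In the 1-dof graph, `v` has degree 2 exactly when no later step uses it as an anchor, so by the
1-path property the last created vertex is the only unused one. Hence every vertex built on the
base pair is used later: otherwise it would be the last vertex, and the second-to-last vertex,
whose only possible user is anchored on the base, would be unused as well.

Take three vertices `x₁, x₂, x₃` built on the base as one side of `K_{3,3}`, and `v1`, `v2` and the
set `Y` of all remaining vertices as the other. Each `xᵢ` is adjacent to `v1`, `v2` and to the
vertex of `Y` that uses it, and `Y` is connected: following users from any of its vertices stays
in `Y` and ends at the last created vertex.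
-/

open SimpleGraph

variable {α : Type*} [DecidableEq α]

instance (a b : α) : DecidablePred (OnBase a b) := fun p => by
  unfold OnBase; infer_instance

theorem List.exists_eq_append_pair {β : Type*} {l : List β} (h : 2 ≤ l.length) :
    ∃ M q r, l = M ++ [q, r] := by
  rcases hr : l.reverse with _ | ⟨r, _ | ⟨q, M⟩⟩
  · simp_all
  · simp_all [List.reverse_eq_cons_iff]
  · exact ⟨M.reverse, q, r, by simpa using congrArg List.reverse hr⟩

namespace SimpleGraph

variable {V β : Type*} {G : SimpleGraph V}

theorem induce_reachable_of_exists_adj_later {Y : Set V} {t : V} (ht : t ∈ Y) (c : β → V)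
    (l : List β)
    (h : ∀ l₁ p l₂, l = l₁ ++ p :: l₂ → c p ∈ Y → c p ≠ t →
      ∃ q ∈ l₂, c q ∈ Y ∧ G.Adj (c p) (c q))
    (p : β) (hp : p ∈ l) (hpY : c p ∈ Y) : (G.induce Y).Reachable ⟨c p, hpY⟩ ⟨t, ht⟩ := by
  induction l generalizing p with
  | nil => cases hp
  | cons a l ih =>
    have ih := ih fun l₁ p l₂ hl => h (a :: l₁) p l₂ (by rw [hl, List.cons_append])
    rcases List.mem_cons.1 hp with rfl | hp
    · by_cases hpt : c p = t
      · exact (Subtype.ext hpt : (⟨c p, hpY⟩ : Y) = ⟨t, ht⟩) ▸ Reachable.refl _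
      · obtain ⟨q, hq, hqY, hadj⟩ := h [] p l rfl hpY hpt
        exact (show (G.induce Y).Adj ⟨c p, hpY⟩ ⟨c q, hqY⟩ from hadj).reachable.trans
          (ih q hq hqY)
    · exact ih p hp hpY

theorem induce_connected_of_exists_adj_later {Y : Set V} {t : V} (ht : t ∈ Y) (c : β → V)
    (l : List β) (hY : ∀ y ∈ Y, ∃ p ∈ l, c p = y)
    (h : ∀ l₁ p l₂, l = l₁ ++ p :: l₂ → c p ∈ Y → c p ≠ t →
      ∃ q ∈ l₂, c q ∈ Y ∧ G.Adj (c p) (c q)) :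
    (G.induce Y).Connected := by
  have hreach : ∀ y : Y, (G.induce Y).Reachable y ⟨t, ht⟩ := by
    rintro ⟨y, hy⟩
    obtain ⟨p, hp, rfl⟩ := hY y hy
    exact induce_reachable_of_exists_adj_later ht c l h p hp hy
  have : Nonempty Y := ⟨⟨t, ht⟩⟩
  exact ⟨fun x y => (hreach x).trans (hreach y).symm⟩

theorem hasMinor_completeBipartite_three_three {a b x₁ x₂ x₃ : V} {Y : Set V}
    (hnd : [a, b, x₁, x₂, x₃].Nodup) (hY : Disjoint Y {a, b, x₁, x₂, x₃})
    (hYc : (G.induce Y).Connected)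
    (hadj : ∀ x ∈ ({x₁, x₂, x₃} : Set V), G.Adj a x ∧ G.Adj b x ∧ ∃ y ∈ Y, G.Adj y x) :
    HasMinor G (completeBipartiteGraph (Fin 3) (Fin 3)) := by
  simp only [List.nodup_cons, List.mem_cons, List.not_mem_nil, or_false, not_or] at hnd
  simp only [Set.disjoint_insert_right, Set.disjoint_singleton_right] at hY
  simp only [Set.mem_insert_iff, Set.mem_singleton_iff, forall_eq_or_imp, forall_eq] at hadj
  have hYne : Y.Nonempty := Set.nonempty_coe_sort.1 hYc.nonempty
  refine ⟨Sum.elim ![{a}, {b}, Y] ![{x₁}, {x₂}, {x₃}], ?_, ?_, ?_, ?_⟩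
  · rintro (i | i) <;> fin_cases i <;> simp [hYne]
  · rintro (i | i) <;> fin_cases i <;> simp [hYc]
  · rintro (i | i) (j | j) hij <;> fin_cases i <;> fin_cases j <;> simp_all [eq_comm]
  · rintro (i | i) (j | j) hij <;> fin_cases i <;> fin_cases j <;> simp_all [adj_comm]

end SimpleGraph

/-- The step `p = (v, u, w)` attaches its new vertex `v` to `x`. -/
def Anchors (p : α × α × α) (x : α) : Prop := p.2.1 = x ∨ p.2.2 = x

section Construction

variable {S : Finset α} {l l₁ l₂ : List (α × α × α)} {p q : α × α × α} {a b x : α}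

omit [DecidableEq α] in
theorem Anchors.not_onBase (h : Anchors p x) (hxa : x ≠ a) (hxb : x ≠ b) : ¬OnBase a b p := by
  unfold Anchors at h; unfold OnBase; grind

theorem validFrom_cons_iff : ValidFrom S (p :: l) ↔
    p.1 ∉ S ∧ p.2.1 ∈ S ∧ p.2.2 ∈ S ∧ p.2.1 ≠ p.2.2 ∧ ValidFrom (insert p.1 S) l :=
  Iff.rfl

namespace ValidFrom

theorem exists_superset (h : ValidFrom S l) (hp : p ∈ l) :
    ∃ T, S ⊆ T ∧ p.1 ∉ T ∧ p.2.1 ∈ T ∧ p.2.2 ∈ T ∧ p.2.1 ≠ p.2.2 := by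
  induction l generalizing S with
  | nil => cases hp
  | cons r l ih =>
    obtain ⟨hr₁, hr₂, hr₃, hr₄, h⟩ := validFrom_cons_iff.1 h
    rcases List.mem_cons.1 hp with rfl | hp
    · exact ⟨S, subset_rfl, hr₁, hr₂, hr₃, hr₄⟩
    · obtain ⟨T, hT, hpT⟩ := ih h hp
      exact ⟨T, (Finset.subset_insert _ _).trans hT, hpT⟩

theorem creator_ne_of_mem (h : ValidFrom S l) (hp : p ∈ l) (hx : x ∈ S) : p.1 ≠ x := by
  obtain ⟨T, hST, hpT, -⟩ := h.exists_superset hp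
  exact fun hpx => hpT (hST (hpx ▸ hx))

theorem anchors_ne (h : ValidFrom S l) (hp : p ∈ l) : p.2.1 ≠ p.2.2 := by
  obtain ⟨T, -, -, -, -, hne⟩ := h.exists_superset hp
  exact hne

theorem not_anchors_creator (h : ValidFrom S l) (hp : p ∈ l) : ¬Anchors p p.1 := by
  obtain ⟨T, -, hpT, hu, hw, -⟩ := h.exists_superset hp
  rintro (hpu | hpw)
  exacts [hpT (hpu ▸ hu), hpT (hpw ▸ hw)]

theorem pairwise (h : ValidFrom S l) : l.Pairwise fun p q => q.1 ≠ p.1 ∧ ¬Anchors p q.1 := by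
  induction l generalizing S with
  | nil => exact List.Pairwise.nil
  | cons p l ih =>
    obtain ⟨-, hu, hw, -, h⟩ := validFrom_cons_iff.1 h
    refine List.Pairwise.cons (fun q hq => ?_) (ih h)
    have hqS : q.1 ∉ insert p.1 S := fun hqS => h.creator_ne_of_mem hq hqS rfl
    rw [Finset.mem_insert, not_or] at hqS
    exact ⟨hqS.1, by rintro (hqu | hqw); exacts [hqS.2 (hqu ▸ hu), hqS.2 (hqw ▸ hw)]⟩

theorem nodup_map_fst (h : ValidFrom S l) : (l.map Prod.fst).Nodup :=
  List.pairwise_map.2 (h.pairwise.imp fun hpq => hpq.1.symm)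

theorem creator_injOn (h : ValidFrom S l) (hp : p ∈ l) (hq : q ∈ l) (hpq : p.1 = q.1) : p = q :=
  List.inj_on_of_nodup_map h.nodup_map_fst hp hq hpq

theorem mem_of_anchors (h : ValidFrom S l) (hl : l = l₁ ++ p :: l₂) (hq : q ∈ l)
    (ha : Anchors q p.1) : q ∈ l₂ := by
  subst hl
  have hpw := List.pairwise_append.1 h.pairwise
  rcases List.mem_append.1 hq with hq | hq
  · exact absurd ha (hpw.2.2 q hq p List.mem_cons_self).2
  · rcases List.mem_cons.1 hq with rfl | hq
    · exact absurd ha (h.not_anchors_creator (List.mem_append_right _ List.mem_cons_self))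
    · exact hq

theorem not_anchors_getLast (h : ValidFrom S l) (hne : l ≠ []) :
    ∀ q ∈ l, ¬Anchors q (l.getLast hne).1 := fun _ hq ha =>
  List.not_mem_nil (h.mem_of_anchors (List.dropLast_append_getLast hne).symm hq ha)

theorem exists_three_creators (h : ValidFrom S l) (P : α × α × α → Prop) [DecidablePred P]
    (h3 : 3 ≤ l.countP fun p => decide (P p)) :
    ∃ p₁ ∈ l, ∃ p₂ ∈ l, ∃ p₃ ∈ l, P p₁ ∧ P p₂ ∧ P p₃ ∧
      p₁.1 ≠ p₂.1 ∧ p₁.1 ≠ p₃.1 ∧ p₂.1 ≠ p₃.1 := by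
  have hnd : ((l.filter P).map Prod.fst).Nodup :=
    h.nodup_map_fst.sublist (List.filter_sublist.map _)
  have hcard : 2 < ((l.filter P).map Prod.fst).toFinset.card := by
    rw [List.toFinset_card_of_nodup hnd, List.length_map, ← List.countP_eq_length_filter]
    omega
  obtain ⟨_, hx₁, _, hx₂, _, hx₃, h₁₂, h₁₃, h₂₃⟩ := Finset.two_lt_card.1 hcard
  simp only [List.mem_toFinset, List.mem_map, List.mem_filter, decide_eq_true_eq] at hx₁ hx₂ hx₃
  obtain ⟨p₁, ⟨hp₁, hP₁⟩, rfl⟩ := hx₁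
  obtain ⟨p₂, ⟨hp₂, hP₂⟩, rfl⟩ := hx₂
  obtain ⟨p₃, ⟨hp₃, hP₃⟩, rfl⟩ := hx₃
  exact ⟨p₁, hp₁, p₂, hp₂, p₃, hp₃, hP₁, hP₂, hP₃, h₁₂, h₁₃, h₂₃⟩

end ValidFrom

theorem mem_buildVerts : x ∈ buildVerts a b l ↔ x = a ∨ x = b ∨ ∃ p ∈ l, p.1 = x := by
  suffices ∀ S : Finset α, x ∈ l.foldl (fun s p => insert p.1 s) S ↔ x ∈ S ∨ ∃ p ∈ l, p.1 = x by
    simp [buildVerts, this, or_assoc]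
  induction l with
  | nil => simp
  | cons p l ih =>
    intro S
    simp only [List.foldl_cons, ih, Finset.mem_insert, List.exists_mem_cons_iff]
    grind

theorem mem_buildEdges {e : Sym2 α} :
    e ∈ buildEdges a b l ↔ e = s(a, b) ∨ ∃ p ∈ l, e = s(p.1, p.2.1) ∨ e = s(p.1, p.2.2) := by
  suffices ∀ E : Finset (Sym2 α),
      e ∈ l.foldl (fun s p => insert s(p.1, p.2.1) (insert s(p.1, p.2.2) s)) E ↔
        e ∈ E ∨ ∃ p ∈ l, e = s(p.1, p.2.1) ∨ e = s(p.1, p.2.2) by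
    simp [buildEdges, this]
  induction l with
  | nil => simp
  | cons p l ih =>
    intro E
    simp only [List.foldl_cons, ih, Finset.mem_insert, List.exists_mem_cons_iff]
    grind

end Construction

def oneDofEdges (a b : α) (l : List (α × α × α)) : Finset (Sym2 α) :=
  (buildEdges a b l).erase s(a, b)

def oneDofGraph (a b : α) (l : List (α × α × α)) : SimpleGraph α :=
  SimpleGraph.fromEdgeSet (oneDofEdges a b l : Set (Sym2 α))

section OneDof

variable {a b x : α} {l : List (α × α × α)} {p q : α × α × α} {X : Set α}
  (hl : ValidFrom {a, b} l)
include hl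

theorem creator_ne_left (hp : p ∈ l) : p.1 ≠ a :=
  hl.creator_ne_of_mem hp (Finset.mem_insert_self a {b})

theorem creator_ne_right (hp : p ∈ l) : p.1 ≠ b :=
  hl.creator_ne_of_mem hp (Finset.mem_insert_of_mem (Finset.mem_singleton_self b))

omit hl in
theorem creator_mem_buildVerts (hp : p ∈ l) : p.1 ∈ buildVerts a b l :=
  mem_buildVerts.2 (Or.inr (Or.inr ⟨p, hp, rfl⟩))

theorem edge_mem_oneDofEdges (hp : p ∈ l) (hx : Anchors p x) :
    s(p.1, x) ∈ oneDofEdges a b l := by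
  refine Finset.mem_erase.2 ⟨?_, mem_buildEdges.2 (Or.inr ⟨p, hp, ?_⟩)⟩
  · simp [creator_ne_left hl hp, creator_ne_right hl hp]
  · rcases hx with rfl | rfl <;> simp

theorem oneDofGraph_adj (hp : p ∈ l) (hx : Anchors p x) : (oneDofGraph a b l).Adj p.1 x :=
  (SimpleGraph.fromEdgeSet_adj _).2 ⟨edge_mem_oneDofEdges hl hp hx,
    fun hpx => hl.not_anchors_creator hp (hpx ▸ hx)⟩

theorem degreeIn_creator_eq_two (hp : p ∈ l) (hna : ∀ q ∈ l, ¬Anchors q p.1) :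
    degreeIn (oneDofEdges a b l) p.1 = 2 := by
  have hedges :
      (oneDofEdges a b l).filter (fun e => p.1 ∈ e) = {s(p.1, p.2.1), s(p.1, p.2.2)} := by
    ext e
    simp only [Finset.mem_filter, Finset.mem_insert, Finset.mem_singleton]
    constructor
    · rintro ⟨he, hpe⟩
      obtain ⟨hne, he⟩ := Finset.mem_erase.1 he
      rcases mem_buildEdges.1 he with rfl | ⟨q, hq, rfl | rfl⟩
      · exact absurd rfl hne
      all_goals
        rcases Sym2.mem_iff.1 hpe with hpq | hpq
        · obtain rfl := hl.creator_injOn hp hq hpq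
          simp
        · exact absurd (by simp [Anchors, hpq]) (hna q hq)
    · rintro (rfl | rfl)
      exacts [⟨edge_mem_oneDofEdges hl hp (Or.inl rfl), Sym2.mem_mk_left _ _⟩,
        ⟨edge_mem_oneDofEdges hl hp (Or.inr rfl), Sym2.mem_mk_left _ _⟩]
  rw [degreeIn, hedges, Finset.card_pair]
  exact fun h => hl.anchors_ne hp (Sym2.congr_right.1 h)

theorem creator_mem_sdiff (hX : ∀ p ∈ l, p.1 ∈ X → OnBase a b p) (hq : q ∈ l)
    (hqb : ¬OnBase a b q) : q.1 ∈ (buildVerts a b l : Set α) \ insert a (insert b X) := by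
  refine ⟨creator_mem_buildVerts hq, ?_⟩
  simp only [Set.mem_insert_iff, not_or]
  exact ⟨creator_ne_left hl hq, creator_ne_right hl hq, fun hqX => hqb (hX q hq hqX)⟩

variable (h1p : OnePath (buildVerts a b l) (oneDofEdges a b l) a b)
include h1p

theorem eq_of_forall_not_anchors (hp : p ∈ l) (hq : q ∈ l) (hpa : ∀ r ∈ l, ¬Anchors r p.1)
    (hqa : ∀ r ∈ l, ¬Anchors r q.1) : p = q :=
  hl.creator_injOn hp hq <| h1p.unique
    ⟨creator_mem_buildVerts hp, creator_ne_left hl hp, creator_ne_right hl hp,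
      degreeIn_creator_eq_two hl hp hpa⟩
    ⟨creator_mem_buildVerts hq, creator_ne_left hl hq, creator_ne_right hl hq,
      degreeIn_creator_eq_two hl hq hqa⟩

theorem exists_anchors_of_onBase (hlen : 2 ≤ l.length) (hp : p ∈ l) (hb : OnBase a b p) :
    ∃ q ∈ l, Anchors q p.1 := by
  by_contra! hpa
  obtain ⟨M, q, r, rfl⟩ := List.exists_eq_append_pair hlen
  have hq : q ∈ M ++ [q, r] := by simp
  have hr : r ∈ M ++ [q, r] := by simp
  have hra : ∀ s ∈ M ++ [q, r], ¬Anchors s r.1 := fun s hs ha => by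
    simpa using hl.mem_of_anchors (l₁ := M ++ [q]) (l₂ := []) (by simp) hs ha
  obtain rfl := eq_of_forall_not_anchors hl h1p hr hp hra hpa
  have hqa : ∀ s ∈ M ++ [q, r], ¬Anchors s q.1 := fun s hs ha => by
    obtain rfl : s = r := by simpa using hl.mem_of_anchors (l₁ := M) (l₂ := [r]) rfl hs ha
    exact ha.not_onBase (creator_ne_left hl hq) (creator_ne_right hl hq) hb
  obtain rfl := eq_of_forall_not_anchors hl h1p hq hr hqa hra
  simpa [List.nodup_append] using hl.nodup_map_fst

theorem onBase_adj (hX : ∀ p ∈ l, p.1 ∈ X → OnBase a b p) (hlen : 2 ≤ l.length) (hp : p ∈ l)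
    (hb : OnBase a b p) :
    (oneDofGraph a b l).Adj a p.1 ∧ (oneDofGraph a b l).Adj b p.1 ∧
      ∃ y ∈ (buildVerts a b l : Set α) \ insert a (insert b X), (oneDofGraph a b l).Adj y p.1 := by
  obtain ⟨q, hq, ha⟩ := exists_anchors_of_onBase hl h1p hlen hp hb
  have hpa : Anchors p a := by unfold Anchors; unfold OnBase at hb; tauto
  have hpb : Anchors p b := by unfold Anchors; unfold OnBase at hb; tauto
  exact ⟨(oneDofGraph_adj hl hp hpa).symm, (oneDofGraph_adj hl hp hpb).symm,
    q.1, creator_mem_sdiff hl hX hq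
      (ha.not_onBase (creator_ne_left hl hp) (creator_ne_right hl hp)), oneDofGraph_adj hl hq ha⟩

theorem induce_sdiff_connected (hX : ∀ p ∈ l, p.1 ∈ X → OnBase a b p) (hlen : 2 ≤ l.length) :
    ((oneDofGraph a b l).induce
      ((buildVerts a b l : Set α) \ insert a (insert b X))).Connected := by
  have hne : l ≠ [] := List.ne_nil_of_length_pos (by omega)
  have hlast := hl.not_anchors_getLast hne
  refine SimpleGraph.induce_connected_of_exists_adj_later (t := (l.getLast hne).1) ?_
    Prod.fst l ?_ ?_
  · refine creator_mem_sdiff hl hX (List.getLast_mem hne) fun hb => ?_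
    obtain ⟨q, hq, ha⟩ := exists_anchors_of_onBase hl h1p hlen (List.getLast_mem hne) hb
    exact hlast q hq ha
  · rintro y ⟨hyV, hy⟩
    simp only [Set.mem_insert_iff, not_or] at hy
    rcases mem_buildVerts.1 hyV with rfl | rfl | hy'
    exacts [absurd rfl hy.1, absurd rfl hy.2.1, hy']
  · intro l₁ p l₂ hsplit hpY hpt
    have hp : p ∈ l := hsplit ▸ by simp
    obtain ⟨q, hq, ha⟩ : ∃ q ∈ l, Anchors q p.1 := by
      by_contra! hpa
      exact hpt (congrArg Prod.fst
        (eq_of_forall_not_anchors hl h1p hp (List.getLast_mem hne) hpa hlast))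
    simp only [Set.mem_sdiff, Set.mem_insert_iff, not_or] at hpY
    exact ⟨q, hl.mem_of_anchors hsplit hq ha,
      creator_mem_sdiff hl hX hq (ha.not_onBase hpY.2.1 hpY.2.2.1),
      (oneDofGraph_adj hl hq ha).symm⟩

end OneDof

/-- A 1-path simple 1-dof Henneberg-I graph in which at least three vertices
are constructed directly on the base pair `(v1, v2)` has a `K_{3,3}` minor. -/
theorem stmt9 (v1 v2 : α) (hab : v1 ≠ v2) (l : List (α × α × α))
    (hl : ValidFrom {v1, v2} l)
    (V : Finset α) (E : Finset (Sym2 α))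
    (hV : V = buildVerts v1 v2 l) (hE : E = (buildEdges v1 v2 l).erase s(v1, v2))
    (h1p : OnePath V E v1 v2)
    (h3 : 3 ≤ l.countP (fun p => decide (OnBase v1 v2 p))) :
    HasMinor (SimpleGraph.fromEdgeSet (E : Set (Sym2 α)))
      (completeBipartiteGraph (Fin 3) (Fin 3)) := by
  subst hV hE
  have hlen : 2 ≤ l.length := by
    have := l.countP_le_length (p := fun p => decide (OnBase v1 v2 p))
    omega
  obtain ⟨p₁, hp₁, p₂, hp₂, p₃, hp₃, hb₁, hb₂, hb₃, h₁₂, h₁₃, h₂₃⟩ :=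
    hl.exists_three_creators _ h3
  have hX : ∀ p ∈ l, p.1 ∈ ({p₁.1, p₂.1, p₃.1} : Set α) → OnBase v1 v2 p := by
    rintro p hp (h | h | h)
    exacts [hl.creator_injOn hp hp₁ h ▸ hb₁, hl.creator_injOn hp hp₂ h ▸ hb₂,
      hl.creator_injOn hp hp₃ h ▸ hb₃]
  refine SimpleGraph.hasMinor_completeBipartite_three_three ?_ Set.disjoint_sdiff_left
    (induce_sdiff_connected hl h1p hX hlen) ?_
  · have hne : ∀ p ∈ l, v1 ≠ p.1 ∧ v2 ≠ p.1 := fun p hp =>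
      ⟨(creator_ne_left hl hp).symm, (creator_ne_right hl hp).symm⟩
    simp [hab, h₁₂, h₁₃, h₂₃, hne p₁ hp₁, hne p₂ hp₂, hne p₃ hp₃]
  · rintro _ (rfl | rfl | rfl)
    exacts [onBase_adj hl h1p hX hlen hp₁ hb₁, onBase_adj hl h1p hX hlen hp₂ hb₂,
      onBase_adj hl h1p hX hlen hp₃ hb₃]
end
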